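/- arXiv:1611.02099 — 9 statements merged into one kernel-verified Lean document; each statement's English description precedes it below -/
import Mathlib

section
/- Let a_1,...,a_n and b_1,...,b_n be non-negative real numbers and s a positive integer. Then the sum over all pairs (i,j) of |b_j^s - a_i^s| is at least n·(Σ_j b_j^s) − (Σ_j b_j^{s−1})·(Σ_i a_i). -/
/-!
Pointwise, `|x^s - y^s| ≥ x^{s-1} (x - y)` for `x, y ≥ 0`: if `y ≤ x` this is `y^s ≤ x^{s-1} y`,
and otherwise the right-hand side is `≤ 0`. Summing over all pairs `(i, j)` with `x = b j`, `y = a i`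
gives the inequality.
-/

open Finset

lemma pow_succ_sub_pow_mul_le_abs_pow_succ_sub {R : Type*} [CommRing R] [LinearOrder R]
    [IsStrictOrderedRing R] {x y : R} (hx : 0 ≤ x) (hy : 0 ≤ y) (k : ℕ) :
    x ^ (k + 1) - x ^ k * y ≤ |x ^ (k + 1) - y ^ (k + 1)| := by
  rcases le_or_gt y x with hyx | hxy
  · have : y ^ (k + 1) ≤ x ^ k * y := by
      rw [pow_succ]
      exact mul_le_mul_of_nonneg_right (pow_le_pow_left₀ hy hyx k) hy
    exact le_abs.mpr (Or.inl (by linarith))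
  · calc x ^ (k + 1) - x ^ k * y = x ^ k * (x - y) := by ring
      _ ≤ 0 := mul_nonpos_of_nonneg_of_nonpos (pow_nonneg hx k) (by linarith)
      _ ≤ _ := abs_nonneg _

lemma sum_sum_sub_mul_eq {ι κ R : Type*} [Fintype ι] [Fintype κ] [CommRing R]
    (f g : κ → R) (a : ι → R) :
    ∑ i, ∑ j, (f j - g j * a i) = Fintype.card ι * ∑ j, f j - (∑ j, g j) * ∑ i, a i := by
  simp only [sum_sub_distrib, sum_const, card_univ, nsmul_eq_mul, sum_mul, mul_sum]

theorem stmt_0 (n : ℕ) (a b : Fin n → ℝ) (ha : ∀ i, 0 ≤ a i) (hb : ∀ j, 0 ≤ b j)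
    (s : ℕ) (hs : 1 ≤ s) :
    ∑ i, ∑ j, |b j ^ s - a i ^ s| ≥
      n * ∑ j, b j ^ s - (∑ j, b j ^ (s - 1)) * ∑ i, a i := by
  obtain ⟨k, rfl⟩ := Nat.exists_eq_add_of_le' hs
  rw [Nat.add_sub_cancel, ge_iff_le]
  calc (n : ℝ) * ∑ j, b j ^ (k + 1) - (∑ j, b j ^ k) * ∑ i, a i
      = ∑ i, ∑ j, (b j ^ (k + 1) - b j ^ k * a i) := by
        rw [sum_sum_sub_mul_eq, Fintype.card_fin]
    _ ≤ ∑ i, ∑ j, |b j ^ (k + 1) - a i ^ (k + 1)| := sum_le_sum fun i _ => sum_le_sum fun j _ =>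
        pow_succ_sub_pow_mul_le_abs_pow_succ_sub (hb j) (ha i) k
end

section
/- Let a_1,...,a_n and b_1,...,b_n be non-negative real numbers and s a positive integer. Then Σ_{i,j} |b_j^s − a_i^s| ≥ (Σ_j b_j^{s−1}) · (Σ_j b_j − Σ_i a_i). -/
/-! Termwise, `|b ^ s - a ^ s| ≥ b ^ (s - 1) * (b - a)` for `a, b ≥ 0`. Summing over all pairs gives
`n * ∑ b ^ s - (∑ b ^ (s - 1)) * ∑ a`, and Chebyshev's sum inequality for the similarly ordered
sequences `b ^ (s - 1)` and `b` bounds `(∑ b ^ (s - 1)) * ∑ b` by `n * ∑ b ^ s`. -/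

open Finset

variable {R : Type*} [CommRing R] [LinearOrder R] [IsStrictOrderedRing R]

theorem pow_mul_sub_le_abs_pow_succ_sub_pow_succ {x y : R} (hx : 0 ≤ x) (hy : 0 ≤ y) (t : ℕ) :
    y ^ t * (y - x) ≤ |y ^ (t + 1) - x ^ (t + 1)| := by
  rcases le_total x y with hxy | hyx
  · have hpow : x ^ t ≤ y ^ t := pow_le_pow_left₀ hx hxy t
    calc y ^ t * (y - x) ≤ y ^ (t + 1) - x ^ (t + 1) := by
          rw [pow_succ, pow_succ]; nlinarith
      _ ≤ |y ^ (t + 1) - x ^ (t + 1)| := le_abs_self _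
  · exact (mul_nonpos_of_nonneg_of_nonpos (pow_nonneg hy t) (sub_nonpos.2 hyx)).trans
      (abs_nonneg _)

variable {ι : Type*} [Fintype ι]

theorem sum_pow_mul_sum_le_card_mul_sum_pow_succ {b : ι → R} (hb : ∀ j, 0 ≤ b j) (t : ℕ) :
    (∑ j, b j ^ t) * ∑ j, b j ≤ Fintype.card ι * ∑ j, b j ^ (t + 1) := by
  have hmono : Monovary (fun j ↦ b j ^ t) b := fun i j h ↦ pow_le_pow_left₀ (hb i) h.le t
  simpa [pow_succ] using hmono.sum_mul_sum_le_card_mul_sum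

theorem sum_pow_mul_sub_sum_le_sum_abs_pow_succ_sub {a b : ι → R} (ha : ∀ i, 0 ≤ a i)
    (hb : ∀ j, 0 ≤ b j) (t : ℕ) :
    (∑ j, b j ^ t) * (∑ j, b j - ∑ i, a i) ≤ ∑ i, ∑ j, |b j ^ (t + 1) - a i ^ (t + 1)| :=
  calc (∑ j, b j ^ t) * (∑ j, b j - ∑ i, a i)
        = (∑ j, b j ^ t) * ∑ j, b j - (∑ j, b j ^ t) * ∑ i, a i := mul_sub _ _ _
    _ ≤ Fintype.card ι * ∑ j, b j ^ (t + 1) - (∑ j, b j ^ t) * ∑ i, a i :=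
        sub_le_sub_right (sum_pow_mul_sum_le_card_mul_sum_pow_succ hb t) _
    _ = ∑ i, ∑ j, b j ^ t * (b j - a i) := by
        simp only [mul_sub, sum_sub_distrib, sum_const, card_univ, nsmul_eq_mul, ← sum_mul,
          ← mul_sum, pow_succ]
    _ ≤ ∑ i, ∑ j, |b j ^ (t + 1) - a i ^ (t + 1)| :=
        sum_le_sum fun i _ ↦ sum_le_sum fun j _ ↦
          pow_mul_sub_le_abs_pow_succ_sub_pow_succ (ha i) (hb j) t

theorem stmt_1 (n : ℕ) (a b : Fin n → ℝ) (ha : ∀ i, 0 ≤ a i) (hb : ∀ j, 0 ≤ b j)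
    (s : ℕ) (hs : 1 ≤ s) :
    ∑ i, ∑ j, |b j ^ s - a i ^ s| ≥
      (∑ j, b j ^ (s - 1)) * (∑ j, b j - ∑ i, a i) := by
  obtain ⟨t, rfl⟩ := Nat.exists_eq_add_of_le' hs
  simpa using sum_pow_mul_sub_sum_le_sum_abs_pow_succ_sub ha hb t
end

section
/- If a graph G on n vertices satisfies: for every subset S, the number of ordered pairs (s,t) ∈ S² with st an edge is within γn² of p|S|² (property P*₂,ₚ(γ)), then for every subset S, the number of labeled (injective homomorphism) copies of K_r in G[S] is within r²γn^r + O_r(n^{r−1}) of p^{C(r,2)}|S|^r. -/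
/-!
Let `t(E)` (`SimpleGraph.homCount`) count the maps `x : Fin r → S` sending every pair of `E` to
an edge of `G`. Adding a pair `{i, j}` to `E` turns `t(E)` into `p · t(E)` up to a small error:
once all coordinates other than `x i, x j` are fixed, the summand of the difference is
`φ (x i) * ψ (x j) * (1_G(x i, x j) - p)` with `0 ≤ φ, ψ ≤ 1`. The hypothesis on the sets
`S²`, polarized to pairs of sets `X × Y` and then extended to such weights, bounds each slice
by `2γn²`, hence the difference by `2γnʳ`. Telescoping over the `C(r, 2)` edges of `K_r`
gives the error `2 C(r, 2) γ nʳ ≤ r² γ nʳ`.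
-/

open Finset Function

theorem sum_sum_update {ι β M : Type*} [Fintype ι] [DecidableEq ι] [Fintype β]
    [AddCommMonoid M] (f : (ι → β) → M) (i : ι) :
    ∑ x, ∑ a, f (update x i a) = Fintype.card β • ∑ x, f x := by
  -- `(x, a) ↦ (update x i a, x i)` is an involution of `(ι → β) × β`
  let e : (ι → β) × β ≃ (ι → β) × β :=
    { toFun := fun xa => (update xa.1 i xa.2, xa.1 i)
      invFun := fun xa => (update xa.1 i xa.2, xa.1 i)
      left_inv := fun _ => by simp
      right_inv := fun _ => by simp }
  calc ∑ x, ∑ a, f (update x i a) = ∑ xa, f (e xa).1 :=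
        (Fintype.sum_prod_type' fun x a => f (update x i a)).symm
    _ = ∑ xa : (ι → β) × β, f xa.1 := e.sum_comp (f ∘ Prod.fst)
    _ = Fintype.card β • ∑ x, f x := by
      rw [Fintype.sum_prod_type' fun x _ => f x, sum_comm, sum_const, card_univ]

theorem abs_sum_mul_le_of_forall_abs_sum_le {ι : Type*} [Fintype ι] {c : ι → ℝ} {K : ℝ}
    (hc : ∀ s : Finset ι, |∑ a ∈ s, c a| ≤ K) {φ : ι → ℝ}
    (hφ : ∀ a, φ a ∈ unitInterval) :
    |∑ a, φ a * c a| ≤ K := by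
  classical
  have hpos := (abs_le.mp (hc (univ.filter fun a => 0 ≤ c a))).2
  have hneg := (abs_le.mp (hc (univ.filter fun a => c a < 0))).1
  rw [sum_filter] at hpos hneg
  -- `φ a * c a` lies between `min (c a) 0` and `max (c a) 0`
  refine abs_le.mpr
    ⟨hneg.trans (sum_le_sum fun a _ => ?_), (sum_le_sum fun a _ => ?_).trans hpos⟩ <;>
    obtain ⟨h0, h1⟩ := hφ a <;> split_ifs <;> nlinarith

theorem abs_sum_sum_le_of_forall_abs_sum_sum_self_le {V : Type*} [Fintype V] [DecidableEq V]
    {w : V → V → ℝ} (hw : ∀ a b, w a b = w b a) {ε : ℝ}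
    (h : ∀ X : Finset V, |∑ a ∈ X, ∑ b ∈ X, w a b| ≤ ε) (X Y : Finset V) :
    |∑ a ∈ X, ∑ b ∈ Y, w a b| ≤ 2 * ε := by
  have hsymm : ∑ a ∈ Y, ∑ b ∈ X, w a b = ∑ a ∈ X, ∑ b ∈ Y, w a b := by
    rw [sum_comm]; simp only [hw]
  have hind : ∀ Z T : Finset V, ∑ a ∈ Z, ∑ b ∈ T, w a b
      = ∑ a, ∑ b, (if a ∈ Z then 1 else 0) * (if b ∈ T then 1 else 0) * w a b := by
    intro Z T
    simp [ite_mul]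
  -- polarization: `1_X = 1_{X \ Y} + 1_{X ∩ Y}` and `1_Y = 1_{Y \ X} + 1_{X ∩ Y}`
  have key : 2 * ∑ a ∈ X, ∑ b ∈ Y, w a b
      = ∑ a ∈ X ∪ Y, ∑ b ∈ X ∪ Y, w a b + ∑ a ∈ X ∩ Y, ∑ b ∈ X ∩ Y, w a b
        - ∑ a ∈ X \ Y, ∑ b ∈ X \ Y, w a b - ∑ a ∈ Y \ X, ∑ b ∈ Y \ X, w a b := by
    rw [two_mul]
    nth_rw 2 [← hsymm]
    simp only [hind, ← sum_add_distrib, ← sum_sub_distrib]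
    refine sum_congr rfl fun a _ => sum_congr rfl fun b _ => ?_
    by_cases ha : a ∈ X <;> by_cases ha' : a ∈ Y <;> by_cases hb : b ∈ X <;>
      by_cases hb' : b ∈ Y <;> simp [ha, ha', hb, hb']
  have := h (X ∪ Y); have := h (X ∩ Y); have := h (X \ Y); have := h (Y \ X)
  rw [abs_le] at *
  constructor <;> linarith

/-- `w` has (unnormalized) cut norm at most `K`. -/
def CutNormLE {V : Type*} [Fintype V] (w : V → V → ℝ) (K : ℝ) : Prop :=
  ∀ φ ψ : V → ℝ, (∀ a, φ a ∈ unitInterval) → (∀ b, ψ b ∈ unitInterval) →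
    |∑ a, ∑ b, φ a * ψ b * w a b| ≤ K

theorem cutNormLE_of_forall_abs_sum_sum_le {V : Type*} [Fintype V] {w : V → V → ℝ} {K : ℝ}
    (h : ∀ X Y : Finset V, |∑ a ∈ X, ∑ b ∈ Y, w a b| ≤ K) : CutNormLE w K := by
  intro φ ψ hφ hψ
  simp only [mul_assoc, ← mul_sum]
  refine abs_sum_mul_le_of_forall_abs_sum_le (fun X => ?_) hφ
  rw [sum_comm]
  simp only [← mul_sum]
  refine abs_sum_mul_le_of_forall_abs_sum_le (fun Y => ?_) hψ
  rw [sum_comm]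
  exact h X Y

theorem abs_sum_mul_mul_le_of_update_eq {ι V : Type*} [Fintype ι] [DecidableEq ι] [Fintype V]
    {w : V → V → ℝ} {c : ℝ}
    (hw : CutNormLE w (c * Fintype.card V ^ 2))
    {i j : ι} (hij : i ≠ j) {P Q : (ι → V) → ℝ}
    (hP : ∀ x, P x ∈ unitInterval) (hQ : ∀ x, Q x ∈ unitInterval)
    (hPj : ∀ x b, P (update x j b) = P x) (hQi : ∀ x a, Q (update x i a) = Q x) :
    |∑ x, P x * Q x * w (x i) (x j)| ≤ c * Fintype.card V ^ Fintype.card ι := by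
  rcases isEmpty_or_nonempty V with hV | hV
  · have : IsEmpty (ι → V) := ⟨fun x => hV.elim (x i)⟩
    have : Nonempty ι := ⟨i⟩
    simp [Fintype.card_ne_zero]
  set f : (ι → V) → ℝ := fun x => P x * Q x * w (x i) (x j) with hf
  -- on the slice through `x` in the coordinates `i, j` the summand is `φ a * ψ b * w a b`
  have hslice (x : ι → V) :
      |∑ a, ∑ b, f (update (update x i a) j b)| ≤ c * Fintype.card V ^ 2 := by
    have hQ' (a b : V) : Q (update (update x i a) j b) = Q (update x j b) := by
      rw [update_comm hij, hQi]
    simp only [hf, hPj, hQ', update_self, update_of_ne hij]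
    exact hw _ _ (fun a => hP _) (fun b => hQ _)
  have hn : (0 : ℝ) < Fintype.card V ^ 2 := by positivity
  refine le_of_mul_le_mul_left ?_ hn
  calc (Fintype.card V : ℝ) ^ 2 * |∑ x, f x|
      = |∑ x, ∑ a, ∑ b, f (update (update x i a) j b)| := by
        rw [sum_sum_update (fun y => ∑ b, f (update y j b)), sum_sum_update f, smul_smul,
          nsmul_eq_mul, abs_mul, ← sq, Nat.cast_pow, abs_of_pos hn]
    _ ≤ ∑ x : ι → V, c * Fintype.card V ^ 2 :=
        (abs_sum_le_sum_abs _ _).trans (sum_le_sum fun x _ => hslice x)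
    _ = Fintype.card V ^ 2 * (c * Fintype.card V ^ Fintype.card ι) := by
        rw [sum_const, card_univ, Fintype.card_fun, nsmul_eq_mul]; push_cast; ring

namespace SimpleGraph

variable {V ι : Type*} (G : SimpleGraph V)

open Classical in
noncomputable def edgeIndicator (e : Sym2 V) : ℝ := if e ∈ G.edgeSet then 1 else 0

theorem edgeIndicator_mem_unitInterval (e : Sym2 V) : G.edgeIndicator e ∈ unitInterval := by
  unfold edgeIndicator; split_ifs <;> simp

variable [Fintype ι]

open Classical in
noncomputable def homWeight (S : Finset V) (E : Finset (Sym2 ι)) (x : ι → V) : ℝ :=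
  (∏ k, if x k ∈ S then 1 else 0) * ∏ e ∈ E, G.edgeIndicator (e.map x)

variable [DecidableEq ι]

open Classical in
theorem homWeight_eq_mul (S : Finset V) (E : Finset (Sym2 ι)) (j : ι) (x : ι → V) :
    G.homWeight S E x
      = ((∏ k ∈ univ.erase j, if x k ∈ S then 1 else 0) *
          ∏ e ∈ E.filter (j ∉ ·), G.edgeIndicator (e.map x)) *
        ((if x j ∈ S then 1 else 0) *
          ∏ e ∈ E.filter (j ∈ ·), G.edgeIndicator (e.map x)) := by
  rw [homWeight, ← mul_prod_erase univ _ (mem_univ j),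
    ← prod_filter_mul_prod_filter_not E (j ∈ ·)]
  ring

variable [Fintype V]

noncomputable def homCount (S : Finset V) (E : Finset (Sym2 ι)) : ℝ :=
  ∑ x, G.homWeight S E x

theorem homCount_empty (S : Finset V) :
    G.homCount S (∅ : Finset (Sym2 ι)) = #S ^ Fintype.card ι := by
  classical
  simp only [homCount, homWeight, prod_empty, mul_one]
  rw [← Fintype.prod_sum (fun _ v => if v ∈ S then (1 : ℝ) else 0)]
  simp

theorem homCount_insert_sub (S : Finset V) {E : Finset (Sym2 ι)} {e : Sym2 ι} (he : e ∉ E)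
    (p : ℝ) : G.homCount S (insert e E) - p * G.homCount S E
      = ∑ x, G.homWeight S E x * (G.edgeIndicator (e.map x) - p) := by
  simp only [homCount, homWeight, prod_insert he, mul_sum, ← sum_sub_distrib]
  exact sum_congr rfl fun x _ => by ring

theorem abs_homCount_insert_sub_le {p c : ℝ}
    (hw : CutNormLE (fun a b => G.edgeIndicator s(a, b) - p) (c * Fintype.card V ^ 2))
    (S : Finset V) {E : Finset (Sym2 ι)} {i j : ι} (hij : i ≠ j) (hE : s(i, j) ∉ E) :
    |G.homCount S (insert s(i, j) E) - p * G.homCount S E|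
      ≤ c * Fintype.card V ^ Fintype.card ι := by
  simp only [homCount_insert_sub G S hE, homWeight_eq_mul G S E j, Sym2.map_mk]
  refine abs_sum_mul_mul_le_of_update_eq hw hij
    (fun x => unitInterval.mul_mem (unitInterval.prod_mem fun k _ => ?_)
      (unitInterval.prod_mem fun e _ => G.edgeIndicator_mem_unitInterval _))
    (fun x => unitInterval.mul_mem ?_
      (unitInterval.prod_mem fun e _ => G.edgeIndicator_mem_unitInterval _))
    (fun x b => ?_) (fun x a => ?_)
  · split_ifs <;> simp
  · split_ifs <;> simp
  · congr 1 <;> refine prod_congr rfl fun k hk => ?_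
    · rw [update_of_ne (ne_of_mem_erase hk)]
    · refine congrArg _ (Sym2.map_congr fun l hl => update_of_ne ?_ _ _)
      rintro rfl
      exact (mem_filter.1 hk).2 hl
  · congr 1
    · rw [update_of_ne hij.symm]
    · refine prod_congr rfl fun e he => ?_
      obtain ⟨heE, hje⟩ := mem_filter.1 he
      refine congrArg _ (Sym2.map_congr fun l hl => update_of_ne ?_ _ _)
      rintro rfl
      exact hE ((Sym2.mem_and_mem_iff hij).1 ⟨hl, hje⟩ ▸ heE)

theorem abs_homCount_sub_le {p c : ℝ} (hp : p ∈ unitInterval)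
    (hw : CutNormLE (fun a b => G.edgeIndicator s(a, b) - p) (c * Fintype.card V ^ 2))
    (S : Finset V) (E : Finset (Sym2 ι)) (hE : ∀ e ∈ E, ¬e.IsDiag) :
    |G.homCount S E - p ^ #E * #S ^ Fintype.card ι|
      ≤ #E * (c * Fintype.card V ^ Fintype.card ι) := by
  induction E using Finset.induction_on with
  | empty => simp [homCount_empty]
  | insert e E he ih =>
    obtain ⟨i, j⟩ := e
    have hij : i ≠ j := fun h => hE _ (mem_insert_self _ _) (Sym2.mk_isDiag_iff.2 h)
    have ih := ih fun e he' => hE e (mem_insert_of_mem he')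
    have step := G.abs_homCount_insert_sub_le hw S hij he
    rw [card_insert_of_notMem he, pow_succ', mul_assoc]
    calc _ ≤ |G.homCount S (insert s(i, j) E) - p * G.homCount S E|
          + |p * (G.homCount S E - p ^ #E * #S ^ Fintype.card ι)| := by
          rw [mul_sub]
          exact abs_sub_le _ _ _
      _ ≤ c * Fintype.card V ^ Fintype.card ι
          + 1 * (#E * (c * Fintype.card V ^ Fintype.card ι)) := by
          rw [abs_mul, abs_of_nonneg hp.1]
          exact add_le_add step (mul_le_mul hp.2 ih (abs_nonneg _) zero_le_one)
      _ = _ := by push_cast; ring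

theorem homCount_top (S : Finset V) :
    G.homCount S (⊤ : SimpleGraph ι).edgeFinset
      = Nat.card {f : ι → V // Injective f ∧ (∀ i, f i ∈ S) ∧
          ∀ i j, i ≠ j → G.Adj (f i) (f j)} := by
  classical
  rw [Nat.card_eq_fintype_card, Fintype.card_subtype, card_filter, Nat.cast_sum]
  refine sum_congr rfl fun x _ => ?_
  have hedge : (∀ e ∈ (⊤ : SimpleGraph ι).edgeFinset, e.map x ∈ G.edgeSet)
      ↔ ∀ i j, i ≠ j → G.Adj (x i) (x j) := by
    simp [Sym2.forall]
  have hinj (h : ∀ i j, i ≠ j → G.Adj (x i) (x j)) : Injective x :=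
    fun a b hab => by_contra fun hne => (h a b hne).ne hab
  simp only [homWeight, edgeIndicator, prod_boole, mem_univ, true_implies, hedge, ← ite_and,
    boole_mul]
  push_cast
  exact if_congr ⟨fun h => ⟨hinj h.2, h⟩, fun h => h.2⟩ rfl rfl

theorem natCard_adj_eq_sum (S : Finset V) :
    (Nat.card {e : V × V // e.1 ∈ S ∧ e.2 ∈ S ∧ G.Adj e.1 e.2} : ℝ)
      = ∑ a ∈ S, ∑ b ∈ S, G.edgeIndicator s(a, b) := by
  classical
  rw [← sum_product' (f := fun a b => G.edgeIndicator s(a, b)), Nat.card_eq_fintype_card,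
    Fintype.card_subtype]
  simp only [edgeIndicator, mem_edgeSet, sum_boole]
  congr 2
  ext
  simp [and_assoc]

end SimpleGraph

theorem stmt_6 (r : ℕ) (hr : 2 ≤ r) :
    ∃ C : ℝ, 0 ≤ C ∧
      ∀ (V : Type) [Fintype V] (G : SimpleGraph V),
        ∀ (p γ : ℝ), 0 < p → p < 1 →
        ∀ n : ℕ, n = Fintype.card V →
        (∀ S : Finset V,
          |(Nat.card {e : V × V // e.1 ∈ S ∧ e.2 ∈ S ∧ G.Adj e.1 e.2} : ℝ)
              - p * (S.card : ℝ) ^ 2| ≤ γ * n ^ 2) →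
        ∀ S : Finset V,
          |(Nat.card {f : Fin r → V // Function.Injective f ∧ (∀ i, f i ∈ S) ∧
              ∀ i j, i ≠ j → G.Adj (f i) (f j)} : ℝ)
            - p ^ (r.choose 2) * (S.card : ℝ) ^ r|
          ≤ r ^ 2 * γ * n ^ r + C * n ^ (r - 1) := by
  classical
  refine ⟨0, le_rfl, fun V _ G p γ hp0 hp1 n hn hyp S => ?_⟩
  subst hn
  have hdiag (X : Finset V) :
      |∑ a ∈ X, ∑ b ∈ X, (G.edgeIndicator s(a, b) - p)| ≤ γ * Fintype.card V ^ 2 := by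
    convert hyp X using 2
    simp only [G.natCard_adj_eq_sum, sum_sub_distrib, sum_const, nsmul_eq_mul]
    ring
  have hγ : 0 ≤ γ * Fintype.card V ^ 2 := (abs_nonneg _).trans (hdiag ∅)
  have hdisc := abs_sum_sum_le_of_forall_abs_sum_sum_self_le
    (fun a b => by rw [Sym2.eq_swap]) hdiag
  have key := G.abs_homCount_sub_le (c := 2 * γ) ⟨hp0.le, hp1.le⟩
    (mul_assoc 2 γ _ ▸ cutNormLE_of_forall_abs_sum_sum_le hdisc)
    S (⊤ : SimpleGraph (Fin r)).edgeFinset (fun e he => by simpa using he)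
  rw [G.homCount_top, SimpleGraph.card_edgeFinset_top_eq_card_choose_two,
    Fintype.card_fin] at key
  have hchoose : 2 * (r.choose 2 : ℝ) ≤ r ^ 2 := by
    rw [Nat.cast_choose_two]; linarith [r.cast_nonneg (α := ℝ)]
  have hγr : 0 ≤ γ * Fintype.card V ^ r := by
    rw [← Nat.add_sub_cancel' hr, pow_add, ← mul_assoc]; positivity
  calc _ ≤ _ := key
    _ ≤ _ := by nlinarith
end

section
/- Let G be a graph on n vertices satisfying property P*₂,ₚ(γ) (every vertex subset S has ordered edge count within γn² of p|S|²), and let H be a graph on r vertices with m edges. Then for every subset S of V(G), the number of homomorphisms from H to G with all images in S is within m·2γ·n^r of p^m|S|^r. -/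
open Finset
set_option maxHeartbeats 1000000
set_option linter.unusedSectionVars false

section Count
variable {V : Type*} [Fintype V] [DecidableEq V] (G : SimpleGraph V) [DecidableRel G.Adj]
variable {r : ℕ}

def sat (f : Fin r → V) (e : Sym2 (Fin r)) : Prop :=
  ∀ k ∈ e, ∀ l ∈ e, k ≠ l → G.Adj (f k) (f l)

instance (f : Fin r → V) : DecidablePred (sat G f) := fun e => by
  unfold sat; infer_instance

def qc (A B : Finset V) : ℕ := ((A ×ˢ B).filter (fun e => G.Adj e.1 e.2)).card

lemma qc_eq (A B : Finset V) :
    (qc G A B : ℝ) = ∑ x : V, ∑ y : V,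
      (if x ∈ A then (1:ℝ) else 0) * (if y ∈ B then 1 else 0) * (if G.Adj x y then 1 else 0) := by
  rw [qc, Finset.card_filter]
  push_cast
  rw [Finset.sum_product]
  rw [← Finset.sum_subset (Finset.subset_univ A) (by intro x _ hx; simp [hx])]
  refine Finset.sum_congr rfl fun x hx => ?_
  rw [← Finset.sum_subset (Finset.subset_univ B) (by intro y _ hy; simp [hy])]
  refine Finset.sum_congr rfl fun y hy => ?_
  simp [hx, hy]

lemma bilin (p γ : ℝ) (n : ℕ)
    (hyp : ∀ S : Finset V, |(qc G S S : ℝ) - p * (S.card:ℝ) ^ 2| ≤ γ * n ^ 2) :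
    ∀ A B : Finset V, |(qc G A B : ℝ) - p * A.card * B.card| ≤ 2 * (γ * n ^ 2) := by
  intro A B
  have key : (qc G (A ∪ B) (A ∪ B) : ℝ) + qc G (A ∩ B) (A ∩ B)
      = qc G (A \ B) (A \ B) + qc G (B \ A) (B \ A) + 2 * qc G A B := by
    have hsymm : (qc G A B : ℝ) = ∑ x : V, ∑ y : V,
        (if x ∈ B then (1:ℝ) else 0) * (if y ∈ A then 1 else 0) * (if G.Adj x y then 1 else 0) := by
      rw [qc_eq, Finset.sum_comm]
      refine Finset.sum_congr rfl fun x _ => Finset.sum_congr rfl fun y _ => ?_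
      by_cases h : G.Adj x y
      · by_cases hB : x ∈ B <;> by_cases hA : y ∈ A <;> simp [h, h.symm, hB, hA]
      · have h' : ¬ G.Adj y x := fun hc => h hc.symm
        simp [h, h']
    rw [qc_eq, qc_eq, qc_eq, qc_eq]
    have h2 : 2 * (qc G A B : ℝ) = (∑ x : V, ∑ y : V,
        (if x ∈ A then (1:ℝ) else 0) * (if y ∈ B then 1 else 0) * (if G.Adj x y then 1 else 0))
      + ∑ x : V, ∑ y : V,
        (if x ∈ B then (1:ℝ) else 0) * (if y ∈ A then 1 else 0) * (if G.Adj x y then 1 else 0) := by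
      rw [two_mul]; nth_rewrite 2 [hsymm]; rw [qc_eq]
    rw [h2]
    simp only [← Finset.sum_add_distrib]
    refine Finset.sum_congr rfl fun x _ => Finset.sum_congr rfl fun y _ => ?_
    by_cases hxA : x ∈ A <;> by_cases hxB : x ∈ B <;> by_cases hyA : y ∈ A <;>
      by_cases hyB : y ∈ B <;>
      simp [Finset.mem_union, Finset.mem_inter, Finset.mem_sdiff, hxA, hxB, hyA, hyB]
  have hcard : ((A ∪ B).card : ℝ) ^ 2 + ((A ∩ B).card : ℝ) ^ 2
      = ((A \ B).card : ℝ) ^ 2 + ((B \ A).card : ℝ) ^ 2 + 2 * A.card * B.card := by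
    have h1 : (A ∪ B).card + (A ∩ B).card = A.card + B.card := Finset.card_union_add_card_inter A B
    have h2 : (A \ B).card + (A ∩ B).card = A.card := Finset.card_sdiff_add_card_inter A B
    have h3 : (B \ A).card + (B ∩ A).card = B.card := Finset.card_sdiff_add_card_inter B A
    rw [Finset.inter_comm B A] at h3
    have h1' : ((A ∪ B).card : ℝ) + (A ∩ B).card = A.card + B.card := by exact_mod_cast h1
    have h2' : ((A \ B).card : ℝ) + (A ∩ B).card = A.card := by exact_mod_cast h2
    have h3' : ((B \ A).card : ℝ) + (A ∩ B).card = B.card := by exact_mod_cast h3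
    nlinarith [h1', h2', h3']
  have b1 := abs_le.mp (hyp (A ∪ B))
  have b2 := abs_le.mp (hyp (A ∩ B))
  have b3 := abs_le.mp (hyp (A \ B))
  have b4 := abs_le.mp (hyp (B \ A))
  have h5 : p * (((A ∪ B).card:ℝ) ^ 2 + ((A ∩ B).card:ℝ) ^ 2)
      = p * (((A \ B).card:ℝ) ^ 2 + ((B \ A).card:ℝ) ^ 2 + 2 * A.card * B.card) := by
    rw [hcard]
  rw [abs_le]
  constructor <;> nlinarith [key, h5, b1.1, b1.2, b2.1, b2.2, b3.1, b3.2, b4.1, b4.2]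


lemma sat_mk {i j : Fin r} (hij : i ≠ j) (f : Fin r → V) :
    sat G f s(i,j) ↔ G.Adj (f i) (f j) := by
  constructor
  · intro h; exact h i (by simp) j (by simp) hij
  · rintro h k hk l hl hkl
    rw [Sym2.mem_iff] at hk hl
    rcases hk with rfl | rfl <;> rcases hl with rfl | rfl
    · exact absurd rfl hkl
    · exact h
    · exact h.symm
    · exact absurd rfl hkl

lemma sat_congr {f₁ f₂ : Fin r → V} {e : Sym2 (Fin r)} (h : ∀ k ∈ e, f₁ k = f₂ k) :
    sat G f₁ e ↔ sat G f₂ e := by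
  unfold sat
  constructor
  · intro hs k hk l hl hkl; rw [← h k hk, ← h l hl]; exact hs k hk l hl hkl
  · intro hs k hk l hl hkl; rw [h k hk, h l hl]; exact hs k hk l hl hkl

def cnt (S : Finset V) (E : Finset (Sym2 (Fin r))) : ℕ :=
  ((univ : Finset (Fin r → V)).filter (fun f => (∀ i, f i ∈ S) ∧ ∀ e ∈ E, sat G f e)).card

lemma cnt_eq (S : Finset V) (E : Finset (Sym2 (Fin r))) :
    (cnt G S E : ℝ) = ∑ f : Fin r → V,
      (if (∀ i, f i ∈ S) then (1:ℝ) else 0) * (if (∀ e ∈ E, sat G f e) then 1 else 0) := by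
  rw [cnt, Finset.card_filter]
  push_cast
  refine Finset.sum_congr rfl fun f _ => ?_
  by_cases h1 : ∀ i, f i ∈ S <;> by_cases h2 : ∀ e ∈ E, sat G f e <;> simp [h1, h2]

def merge (i j : Fin r) (a b : V) (g : {k : Fin r // k ≠ i ∧ k ≠ j} → V) : Fin r → V :=
  fun k => if h : k = i then a else if h' : k = j then b else g ⟨k, h, h'⟩

variable {i j : Fin r}

@[simp] lemma merge_i (a b : V) (g : {k : Fin r // k ≠ i ∧ k ≠ j} → V) :
    merge i j a b g i = a := dif_pos rfl

@[simp] lemma merge_j (hij : i ≠ j) (a b : V) (g : {k : Fin r // k ≠ i ∧ k ≠ j} → V) :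
    merge i j a b g j = b := by
  rw [merge, dif_neg hij.symm, dif_pos rfl]

@[simp] lemma merge_other (a b : V) (g : {k : Fin r // k ≠ i ∧ k ≠ j} → V)
    {k : Fin r} (h1 : k ≠ i) (h2 : k ≠ j) :
    merge i j a b g k = g ⟨k, h1, h2⟩ := by
  rw [merge, dif_neg h1, dif_neg h2]

lemma merge_congr_b (a b b' : V) (g : {k : Fin r // k ≠ i ∧ k ≠ j} → V)
    {k : Fin r} (hk : k ≠ j) : merge i j a b g k = merge i j a b' g k := by
  by_cases h : k = i
  · subst h; simp
  · rw [merge_other _ _ _ h hk, merge_other _ _ _ h hk]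

lemma merge_congr_a (a a' b : V) (g : {k : Fin r // k ≠ i ∧ k ≠ j} → V)
    {k : Fin r} (hk : k ≠ i) : merge i j a b g k = merge i j a' b g k := by
  by_cases h : k = j
  · subst h; rw [merge, dif_neg hk, dif_pos rfl, merge, dif_neg hk, dif_pos rfl]
  · rw [merge_other _ _ _ hk h, merge_other _ _ _ hk h]

def mergeEquiv (i j : Fin r) (hij : i ≠ j) :
    (V × V × ({k : Fin r // k ≠ i ∧ k ≠ j} → V)) ≃ (Fin r → V) where
  toFun x := merge i j x.1 x.2.1 x.2.2
  invFun f := (f i, f j, fun d => f d.1)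
  left_inv := by
    rintro ⟨a, b, g⟩
    refine Prod.ext ?_ (Prod.ext ?_ ?_)
    · simp
    · exact merge_j hij a b g
    · funext d; exact merge_other a b g d.2.1 d.2.2
  right_inv := by
    intro f; funext k
    by_cases h : k = i
    · subst h; simp
    · by_cases h' : k = j
      · subst h'; exact merge_j hij _ _ _
      · exact merge_other _ _ _ h h'

lemma ind_mul (P Q : Prop) [Decidable P] [Decidable Q] :
    (if P ∧ Q then (1:ℝ) else 0) = (if P then 1 else 0) * (if Q then 1 else 0) := by
  by_cases hP : P <;> by_cases hQ : Q <;> simp [hP, hQ]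

def Aset (S : Finset V) (E : Finset (Sym2 (Fin r))) (i j : Fin r) (v₀ : V)
    (g : {k : Fin r // k ≠ i ∧ k ≠ j} → V) : Finset V :=
  S.filter (fun a => ∀ e ∈ E, i ∈ e → sat G (merge i j a v₀ g) e)

def Bset (S : Finset V) (E : Finset (Sym2 (Fin r))) (i j : Fin r) (v₀ : V)
    (g : {k : Fin r // k ≠ i ∧ k ≠ j} → V) : Finset V :=
  S.filter (fun b => ∀ e ∈ E, i ∉ e → j ∈ e → sat G (merge i j v₀ b g) e)

def cg (S : Finset V) (E : Finset (Sym2 (Fin r))) (i j : Fin r) (v₀ : V)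
    (g : {k : Fin r // k ≠ i ∧ k ≠ j} → V) : ℝ :=
  (if (∀ d, g d ∈ S) then (1:ℝ) else 0) *
    (if (∀ e ∈ E, i ∉ e → j ∉ e → sat G (merge i j v₀ v₀ g) e) then 1 else 0)

lemma step (p γ : ℝ) (n : ℕ) (hn : n = Fintype.card V)
    (hb : ∀ A B : Finset V, |(qc G A B : ℝ) - p * A.card * B.card| ≤ 2 * (γ * n ^ 2))
    (hγ : 0 ≤ γ * (n:ℝ) ^ 2)
    (S : Finset V) (E : Finset (Sym2 (Fin r))) (hij : i ≠ j) (heE : s(i,j) ∉ E) :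
    |(cnt G S (insert s(i,j) E) : ℝ) - p * cnt G S E|
      ≤ (n:ℝ) ^ (Fintype.card {k : Fin r // k ≠ i ∧ k ≠ j}) * (2 * (γ * (n:ℝ) ^ 2)) := by
  rcases isEmpty_or_nonempty V with hV | hV
  · have h0 : ∀ E' : Finset (Sym2 (Fin r)), cnt G S E' = 0 := by
      intro E'
      rw [cnt, Finset.card_eq_zero]
      have : IsEmpty (Fin r → V) := ⟨fun f => (hV.false (f i))⟩
      exact Finset.eq_empty_of_isEmpty _
    rw [h0, h0]
    simp only [Nat.cast_zero, mul_zero, sub_zero, abs_zero]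
    positivity
  obtain ⟨v₀⟩ := hV
  -- expand as a single sum
  have expand : (cnt G S (insert s(i,j) E) : ℝ) - p * cnt G S E
      = ∑ f : Fin r → V,
          (if (∀ k, f k ∈ S) then (1:ℝ) else 0) * (if (∀ e ∈ E, sat G f e) then 1 else 0) *
            ((if sat G f s(i,j) then 1 else 0) - p) := by
    rw [cnt_eq, cnt_eq, Finset.mul_sum, ← Finset.sum_sub_distrib]
    refine Finset.sum_congr rfl fun f _ => ?_
    simp only [Finset.forall_mem_insert]
    by_cases h1 : ∀ k, f k ∈ S <;> by_cases h2 : ∀ e ∈ E, sat G f e <;>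
      by_cases h3 : sat G f s(i,j) <;> simp [h1, h2, h3] <;> split_ifs <;> ring
  have main : (cnt G S (insert s(i,j) E) : ℝ) - p * cnt G S E
      = ∑ g : {k : Fin r // k ≠ i ∧ k ≠ j} → V,
          cg G S E i j v₀ g *
            ((qc G (Aset G S E i j v₀ g) (Bset G S E i j v₀ g) : ℝ)
              - p * (Aset G S E i j v₀ g).card * (Bset G S E i j v₀ g).card) := by
    rw [expand, ← Equiv.sum_comp (mergeEquiv i j hij)]
    simp only [Fintype.sum_prod_type, mergeEquiv, Equiv.coe_fn_mk]
    conv_lhs => enter [2, a]; rw [Finset.sum_comm]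
    rw [Finset.sum_comm]
    refine Finset.sum_congr rfl fun g _ => ?_
    have point : ∀ a b : V,
        ((if ∀ k, merge i j a b g k ∈ S then (1:ℝ) else 0) *
          if ∀ e ∈ E, sat G (merge i j a b g) e then 1 else 0) *
          ((if sat G (merge i j a b g) s(i,j) then 1 else 0) - p)
        = cg G S E i j v₀ g * ((if a ∈ Aset G S E i j v₀ g then (1:ℝ) else 0) *
            (if b ∈ Bset G S E i j v₀ g then 1 else 0) *
            ((if G.Adj a b then 1 else 0) - p)) := by
      intro a b
      have hmem : (∀ k, merge i j a b g k ∈ S) ↔ (a ∈ S ∧ b ∈ S ∧ ∀ d, g d ∈ S) := by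
        constructor
        · intro h
          refine ⟨by simpa using h i, ?_, fun d => ?_⟩
          · have := h j; rwa [merge_j hij] at this
          · have := h d.1; rwa [merge_other _ _ _ d.2.1 d.2.2] at this
        · rintro ⟨ha, hb, hg⟩ k
          by_cases h : k = i
          · subst h; simpa
          · by_cases h' : k = j
            · subst h'; rwa [merge_j hij]
            · rw [merge_other _ _ _ h h']; exact hg _
      have hjE : ∀ e ∈ E, i ∈ e → j ∉ e := fun e he hi hj =>
        heE (((Sym2.mem_and_mem_iff hij).mp ⟨hi, hj⟩) ▸ he)
      have hsplit : (∀ e ∈ E, sat G (merge i j a b g) e) ↔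
          ((∀ e ∈ E, i ∈ e → sat G (merge i j a v₀ g) e) ∧
           (∀ e ∈ E, i ∉ e → j ∈ e → sat G (merge i j v₀ b g) e) ∧
           (∀ e ∈ E, i ∉ e → j ∉ e → sat G (merge i j v₀ v₀ g) e)) := by
        constructor
        · intro h
          refine ⟨?_, ?_, ?_⟩
          · intro e he hi
            have hj : j ∉ e := hjE e he hi
            exact (sat_congr G (fun k hk =>
              merge_congr_b a b v₀ g (fun h' => hj (h' ▸ hk)))).mp (h e he)
          · intro e he hi _
            exact (sat_congr G (fun k hk =>
              merge_congr_a a v₀ b g (fun h' => hi (h' ▸ hk)))).mp (h e he)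
          · intro e he hi hj
            have h1 := (sat_congr G (fun k hk =>
              merge_congr_a a v₀ b g (fun h' => hi (h' ▸ hk)))).mp (h e he)
            exact (sat_congr G (fun k hk =>
              merge_congr_b v₀ b v₀ g (fun h' => hj (h' ▸ hk)))).mp h1
        · rintro ⟨hA, hB, h0⟩ e he
          by_cases hi : i ∈ e
          · have := hA e he hi
            exact (sat_congr G (fun k hk =>
              merge_congr_b a v₀ b g (fun h' => hjE e he hi (h' ▸ hk)))).mp this
          · by_cases hj : j ∈ e
            · have := hB e he hi hj
              exact (sat_congr G (fun k hk =>
                merge_congr_a v₀ a b g (fun h' => hi (h' ▸ hk)))).mp this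
            · have := h0 e he hi hj
              have h1 := (sat_congr G (fun k hk =>
                merge_congr_b v₀ v₀ b g (fun h' => hj (h' ▸ hk)))).mp this
              exact (sat_congr G (fun k hk =>
                merge_congr_a v₀ a b g (fun h' => hi (h' ▸ hk)))).mp h1
      have hsat0 : sat G (merge i j a b g) s(i,j) ↔ G.Adj a b := by
        rw [sat_mk G hij, merge_i, merge_j hij]
      simp only [hmem, hsat0, Aset, Bset, cg, Finset.mem_filter, ind_mul]
      by_cases h7 : ∀ e ∈ E, sat G (merge i j a b g) e
      · obtain ⟨h4, h5, h6⟩ := hsplit.mp h7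
        rw [if_pos h7, if_pos h4, if_pos h5, if_pos h6]; ring
      · rw [if_neg h7]
        by_cases h4 : ∀ e ∈ E, i ∈ e → sat G (merge i j a v₀ g) e <;>
          by_cases h5 : ∀ e ∈ E, i ∉ e → j ∈ e → sat G (merge i j v₀ b g) e <;>
          by_cases h6 : ∀ e ∈ E, i ∉ e → j ∉ e → sat G (merge i j v₀ v₀ g) e
        all_goals first
          | exact absurd (hsplit.mpr ⟨h4, h5, h6⟩) h7
          | (rw [if_neg h4]; ring)
          | (rw [if_neg h5]; ring)
          | (rw [if_neg h6]; ring)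
    refine Eq.trans (Finset.sum_congr rfl fun a _ => Finset.sum_congr rfl fun b _ => point a b) ?_
    have expand2 : ∀ a b : V,
        cg G S E i j v₀ g * ((if a ∈ Aset G S E i j v₀ g then (1:ℝ) else 0) *
            (if b ∈ Bset G S E i j v₀ g then 1 else 0) *
            ((if G.Adj a b then 1 else 0) - p))
        = cg G S E i j v₀ g * ((if a ∈ Aset G S E i j v₀ g then (1:ℝ) else 0) *
            (if b ∈ Bset G S E i j v₀ g then 1 else 0) * (if G.Adj a b then 1 else 0))
          - cg G S E i j v₀ g * p * ((if a ∈ Aset G S E i j v₀ g then (1:ℝ) else 0) *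
            (if b ∈ Bset G S E i j v₀ g then 1 else 0)) := fun a b => by ring
    simp only [expand2, Finset.sum_sub_distrib, ← Finset.mul_sum]
    rw [← qc_eq]
    have hcardA : (∑ a : V, (if a ∈ Aset G S E i j v₀ g then (1:ℝ) else 0))
        = (Aset G S E i j v₀ g).card := by
      simp [Finset.sum_boole, Finset.filter_mem_eq_inter]
    have hcardB : (∑ b : V, (if b ∈ Bset G S E i j v₀ g then (1:ℝ) else 0))
        = (Bset G S E i j v₀ g).card := by
      simp [Finset.sum_boole, Finset.filter_mem_eq_inter]
    rw [hcardB, ← Finset.sum_mul, hcardA]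
    ring
  rw [main]
  calc |∑ g : {k : Fin r // k ≠ i ∧ k ≠ j} → V,
          cg G S E i j v₀ g *
            ((qc G (Aset G S E i j v₀ g) (Bset G S E i j v₀ g) : ℝ)
              - p * (Aset G S E i j v₀ g).card * (Bset G S E i j v₀ g).card)|
      ≤ ∑ g : {k : Fin r // k ≠ i ∧ k ≠ j} → V,
          |cg G S E i j v₀ g *
            ((qc G (Aset G S E i j v₀ g) (Bset G S E i j v₀ g) : ℝ)
              - p * (Aset G S E i j v₀ g).card * (Bset G S E i j v₀ g).card)| :=
        Finset.abs_sum_le_sum_abs _ _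
    _ ≤ ∑ _g : {k : Fin r // k ≠ i ∧ k ≠ j} → V, (1 * (2 * (γ * (n:ℝ) ^ 2))) := by
        refine Finset.sum_le_sum fun g _ => ?_
        rw [abs_mul]
        have h1 : |cg G S E i j v₀ g| ≤ 1 := by
          rw [cg]; split_ifs <;> norm_num
        exact mul_le_mul h1 (hb _ _) (abs_nonneg _) zero_le_one
    _ = (n:ℝ) ^ (Fintype.card {k : Fin r // k ≠ i ∧ k ≠ j}) * (2 * (γ * (n:ℝ) ^ 2)) := by
        rw [Finset.sum_const, Finset.card_univ, nsmul_eq_mul, one_mul,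
          Fintype.card_fun, hn]
        push_cast
        ring

lemma cnt_base (S : Finset V) : cnt G S (∅ : Finset (Sym2 (Fin r))) = S.card ^ r := by
  rw [cnt]
  have h : (univ : Finset (Fin r → V)).filter
      (fun f => (∀ i, f i ∈ S) ∧ ∀ e ∈ (∅ : Finset (Sym2 (Fin r))), sat G f e)
      = Fintype.piFinset (fun _ : Fin r => S) := by
    ext f; simp [Fintype.mem_piFinset]
  rw [h, Fintype.card_piFinset]
  simp

lemma cnt_bound (p γ : ℝ) (hp : 0 < p) (hp1 : p ≤ 1) (n : ℕ) (hn : n = Fintype.card V)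
    (hb : ∀ A B : Finset V, |(qc G A B : ℝ) - p * A.card * B.card| ≤ 2 * (γ * n ^ 2))
    (hγ : 0 ≤ γ * (n:ℝ) ^ 2) (S : Finset V) :
    ∀ E : Finset (Sym2 (Fin r)), (∀ e ∈ E, ¬ e.IsDiag) →
      |(cnt G S E : ℝ) - p ^ E.card * (S.card : ℝ) ^ r|
        ≤ E.card * (2 * (γ * (n:ℝ) ^ r)) := by
  intro E
  induction E using Finset.induction_on with
  | empty => intro _; simp [cnt_base]
  | @insert e E he ih =>
    intro hnd
    have hndE : ∀ e' ∈ E, ¬ e'.IsDiag := fun e' h' => hnd e' (Finset.mem_insert_of_mem h')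
    have ihE := ih hndE
    induction e using Sym2.ind with
    | _ i j =>
    have hij : i ≠ j := by
      intro h
      exact hnd s(i,j) (Finset.mem_insert_self _ _) (by rw [h]; exact Sym2.mk_isDiag_iff.mpr rfl)
    have h2r : 2 ≤ r := by
      have : Nontrivial (Fin r) := ⟨⟨i, j, hij⟩⟩
      have h1 := Fintype.one_lt_card (α := Fin r)
      rw [Fintype.card_fin] at h1
      omega
    have hcardD : Fintype.card {k : Fin r // k ≠ i ∧ k ≠ j} = r - 2 := by
      rw [Fintype.card_subtype]
      have h : (univ.filter fun k => k ≠ i ∧ k ≠ j) = (univ \ {i, j} : Finset (Fin r)) := by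
        ext k; simp [not_or]
      rw [h, Finset.card_sdiff_of_subset (Finset.subset_univ _), Finset.card_univ, Fintype.card_fin,
        Finset.card_insert_of_notMem (by simp [hij]), Finset.card_singleton]
    have hstep := step G p γ n hn hb hγ S E hij he
    rw [hcardD] at hstep
    have hpow : (n:ℝ) ^ (r - 2) * (2 * (γ * (n:ℝ) ^ 2)) = 2 * (γ * (n:ℝ) ^ r) := by
      have h : (n:ℝ) ^ (r - 2) * (n:ℝ) ^ 2 = (n:ℝ) ^ r := by
        rw [← pow_add]; congr 1; omega
      calc (n:ℝ) ^ (r - 2) * (2 * (γ * (n:ℝ) ^ 2))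
          = 2 * (γ * ((n:ℝ) ^ (r - 2) * (n:ℝ) ^ 2)) := by ring
        _ = 2 * (γ * (n:ℝ) ^ r) := by rw [h]
    rw [hpow] at hstep
    have tri := abs_sub_le ((cnt G S (insert s(i,j) E) : ℝ))
      (p * (cnt G S E : ℝ)) (p ^ (E.card + 1) * (S.card : ℝ) ^ r)
    have h2 : |p * (cnt G S E : ℝ) - p ^ (E.card + 1) * (S.card : ℝ) ^ r|
        = p * |(cnt G S E : ℝ) - p ^ E.card * (S.card : ℝ) ^ r| := by
      calc |p * (cnt G S E : ℝ) - p ^ (E.card + 1) * (S.card : ℝ) ^ r|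
          = |p * ((cnt G S E : ℝ) - p ^ E.card * (S.card : ℝ) ^ r)| := by congr 1; ring
        _ = p * |(cnt G S E : ℝ) - p ^ E.card * (S.card : ℝ) ^ r| := by
            rw [abs_mul, abs_of_pos hp]
    have hb0 : (0:ℝ) ≤ E.card * (2 * (γ * (n:ℝ) ^ r)) := le_trans (abs_nonneg _) ihE
    have h3 : p * |(cnt G S E : ℝ) - p ^ E.card * (S.card : ℝ) ^ r|
        ≤ E.card * (2 * (γ * (n:ℝ) ^ r)) := by
      nlinarith [abs_nonneg ((cnt G S E : ℝ) - p ^ E.card * (S.card : ℝ) ^ r)]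
    rw [Finset.card_insert_of_notMem he]
    push_cast
    push_cast at tri ihE hstep h2 h3 hb0
    linarith

end Count

theorem stmt_7 {V : Type*} [Fintype V] (G : SimpleGraph V)
    (p γ : ℝ) (hp : 0 < p) (hp1 : p < 1)
    (n : ℕ) (hn : n = Fintype.card V)
    (hyp : ∀ S : Finset V,
      |(Nat.card {e : V × V // e.1 ∈ S ∧ e.2 ∈ S ∧ G.Adj e.1 e.2} : ℝ)
          - p * (S.card : ℝ) ^ 2| ≤ γ * n ^ 2)
    (r m : ℕ) (H : SimpleGraph (Fin r)) [DecidableRel H.Adj]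
    (hm : m = H.edgeFinset.card) :
    ∀ S : Finset V,
      |(Nat.card {f : Fin r → V // (∀ i, f i ∈ S) ∧
          ∀ i j, H.Adj i j → G.Adj (f i) (f j)} : ℝ)
        - p ^ m * (S.card : ℝ) ^ r| ≤ m * 2 * γ * n ^ r := by
  classical
  intro S
  have hqc : ∀ T : Finset V,
      Nat.card {e : V × V // e.1 ∈ T ∧ e.2 ∈ T ∧ G.Adj e.1 e.2} = qc G T T := by
    intro T
    rw [Nat.card_eq_fintype_card, Fintype.card_subtype, qc]
    congr 1
    ext ⟨x, y⟩
    simp [Finset.mem_product, and_assoc]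
  have hyp' : ∀ T : Finset V, |(qc G T T : ℝ) - p * (T.card : ℝ) ^ 2| ≤ γ * n ^ 2 := by
    intro T
    have h := hyp T
    rwa [hqc T] at h
  have hγ : 0 ≤ γ * (n:ℝ) ^ 2 := le_trans (abs_nonneg _) (hyp' ∅)
  have hb := bilin G p γ n hyp'
  have hnd : ∀ e ∈ H.edgeFinset, ¬ e.IsDiag := fun e he =>
    H.not_isDiag_of_mem_edgeSet (SimpleGraph.mem_edgeFinset.mp he)
  have hcnt : Nat.card {f : Fin r → V // (∀ i, f i ∈ S) ∧
      ∀ i j, H.Adj i j → G.Adj (f i) (f j)} = cnt G S H.edgeFinset := by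
    rw [Nat.card_eq_fintype_card, Fintype.card_subtype, cnt]
    congr 1
    apply Finset.filter_congr
    intro f _
    refine and_congr_right fun _ => ?_
    constructor
    · intro h e he
      induction e using Sym2.ind with
      | _ k l =>
        have hadj : H.Adj k l := by
          rw [SimpleGraph.mem_edgeFinset, SimpleGraph.mem_edgeSet] at he
          exact he
        rw [sat_mk G hadj.ne]
        exact h k l hadj
    · intro h k l hkl
      have hh := h s(k,l) (by rw [SimpleGraph.mem_edgeFinset, SimpleGraph.mem_edgeSet]; exact hkl)
      rwa [sat_mk G hkl.ne] at hh
  have hmain := cnt_bound G p γ hp (le_of_lt hp1) n hn hb hγ S H.edgeFinset hnd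
  rw [hcnt, hm]
  refine le_trans hmain (le_of_eq ?_)
  ring
end

section
/- If a pair (A,B) of vertex subsets of a graph is not lower-(d(A,B),ε)-regular, then it is not upper-(d(A,B),ε/2)-regular; and symmetrically with lower and upper switched. -/
open Finset

/-- Number of ordered edges between `A` and `B`. -/
def epairs {V : Type*} [DecidableEq V] (G : SimpleGraph V) [DecidableRel G.Adj]
    (A B : Finset V) : ℕ :=
  ((A ×ˢ B).filter fun e => G.Adj e.1 e.2).card

/-- Edge density between `A` and `B`. -/
noncomputable def edens {V : Type*} [DecidableEq V] (G : SimpleGraph V) [DecidableRel G.Adj]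
    (A B : Finset V) : ℝ :=
  (epairs G A B : ℝ) / ((A.card : ℝ) * B.card)

def lowerReg {V : Type*} [DecidableEq V] (G : SimpleGraph V) [DecidableRel G.Adj]
    (A B : Finset V) (q ε : ℝ) : Prop :=
  ∀ A' ⊆ A, ∀ B' ⊆ B,
    (epairs G A' B' : ℝ) ≥ q * A'.card * B'.card - ε * A.card * B.card

def upperReg {V : Type*} [DecidableEq V] (G : SimpleGraph V) [DecidableRel G.Adj]
    (A B : Finset V) (q ε : ℝ) : Prop :=
  ∀ A' ⊆ A, ∀ B' ⊆ B,
    (epairs G A' B' : ℝ) ≤ q * A'.card * B'.card + ε * A.card * B.card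

lemma epairs_split_left {V : Type*} [DecidableEq V] (G : SimpleGraph V) [DecidableRel G.Adj]
    (A B : Finset V) (A' : Finset V) (h : A' ⊆ A) :
    epairs G A B = epairs G A' B + epairs G (A \ A') B := by
  unfold epairs
  rw [← card_union_of_disjoint, ← filter_union, ← union_product, union_sdiff_of_subset h]
  · exact disjoint_filter_filter ((disjoint_product).mpr (Or.inl sdiff_disjoint.symm))

lemma epairs_split_right {V : Type*} [DecidableEq V] (G : SimpleGraph V) [DecidableRel G.Adj]
    (A B : Finset V) (B' : Finset V) (h : B' ⊆ B) :
    epairs G A B = epairs G A B' + epairs G A (B \ B') := by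
  unfold epairs
  rw [← card_union_of_disjoint, ← filter_union, ← product_union, union_sdiff_of_subset h]
  exact disjoint_filter_filter <| (disjoint_product).mpr (Or.inr sdiff_disjoint.symm)

theorem stmt_9 {V : Type*} [DecidableEq V] (G : SimpleGraph V) [DecidableRel G.Adj]
    (A B : Finset V) (hA : A.Nonempty) (hB : B.Nonempty) (hAB : Disjoint A B)
    (ε : ℝ) (hε : 0 < ε) :
    (¬ lowerReg G A B (edens G A B) ε → ¬ upperReg G A B (edens G A B) (ε / 2)) ∧
    (¬ upperReg G A B (edens G A B) ε → ¬ lowerReg G A B (edens G A B) (ε / 2)) := by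
  set q := edens G A B with hq
  have hApos : (0 : ℝ) < A.card := by exact_mod_cast (card_pos.mpr hA : 0 < A.card)
  have hBpos : (0 : ℝ) < B.card := by exact_mod_cast (card_pos.mpr hB : 0 < B.card)
  have hkey : (epairs G A B : ℝ) = q * A.card * B.card := by
    rw [hq, edens]
    field_simp
  constructor
  · intro hlow hupp
    apply hlow
    intro A' hA' B' hB'
    by_contra hlt
    push_neg at hlt
    have e1 := hupp (A \ A') (sdiff_subset) B Subset.rfl
    have e2 := hupp A' hA' (B \ B') (sdiff_subset)
    have s1 : epairs G A B = epairs G A' B + epairs G (A \ A') B :=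
      epairs_split_left G A B A' hA'
    have s2 : epairs G A' B = epairs G A' B' + epairs G A' (B \ B') :=
      epairs_split_right G A' B B' hB'
    have c1 : ((A \ A').card : ℝ) = A.card - A'.card := by
      rw [card_sdiff_of_subset hA']
      have := card_le_card hA'
      push_cast [Nat.cast_sub this]
      ring
    have c2 : ((B \ B').card : ℝ) = B.card - B'.card := by
      rw [card_sdiff_of_subset hB']
      have := card_le_card hB'
      push_cast [Nat.cast_sub this]
      ring
    rw [c1] at e1
    rw [c2] at e2
    have : (epairs G A B : ℝ) < q * A.card * B.card := by
      have : (epairs G A B : ℝ) = (epairs G A' B' : ℝ) + (epairs G A' (B \ B') : ℝ)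
          + (epairs G (A \ A') B : ℝ) := by
        rw [s1, s2]; push_cast; ring
      rw [this]
      nlinarith
    linarith [hkey]
  · intro hupp hlow
    apply hupp
    intro A' hA' B' hB'
    by_contra hlt
    push_neg at hlt
    have e1 := hlow (A \ A') (sdiff_subset) B Subset.rfl
    have e2 := hlow A' hA' (B \ B') (sdiff_subset)
    have s1 : epairs G A B = epairs G A' B + epairs G (A \ A') B :=
      epairs_split_left G A B A' hA'
    have s2 : epairs G A' B = epairs G A' B' + epairs G A' (B \ B') :=
      epairs_split_right G A' B B' hB'
    have c1 : ((A \ A').card : ℝ) = A.card - A'.card := by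
      rw [card_sdiff_of_subset hA']
      have := card_le_card hA'
      push_cast [Nat.cast_sub this]
      ring
    have c2 : ((B \ B').card : ℝ) = B.card - B'.card := by
      rw [card_sdiff_of_subset hB']
      have := card_le_card hB'
      push_cast [Nat.cast_sub this]
      ring
    rw [c1] at e1
    rw [c2] at e2
    have : (epairs G A B : ℝ) > q * A.card * B.card := by
      have : (epairs G A B : ℝ) = (epairs G A' B' : ℝ) + (epairs G A' (B \ B') : ℝ)
          + (epairs G (A \ A') B : ℝ) := by
        rw [s1, s2]; push_cast; ring
      rw [this]
      nlinarith
    linarith [hkey]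
end

section
/- Suppose (A,B) is a pair of vertex subsets of a graph which is not upper-(q,γ)-regular. Then there exist subsets A' ⊆ A and B' ⊆ B with |A'| = |B'| and d(A',B') ≥ q + γ·min(|A|/|A'|, |B|/|B'|). -/
open Finset

section Aux
variable {V : Type*} [DecidableEq V] (G : SimpleGraph V) [DecidableRel G.Adj]

lemma epairs_eq_sum (A B : Finset V) :
    epairs G A B = ∑ b ∈ B, (A.filter fun a => G.Adj a b).card := by
  unfold epairs
  rw [Finset.card_filter, Finset.sum_product, Finset.sum_comm]
  exact Finset.sum_congr rfl fun b _ => (Finset.card_filter _ _).symm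

lemma epairs_comm (A B : Finset V) : epairs G A B = epairs G B A := by
  unfold epairs
  have : ((B ×ˢ A).filter fun e => G.Adj e.1 e.2)
      = ((A ×ˢ B).filter fun e => G.Adj e.1 e.2).image Prod.swap := by
    ext ⟨x, y⟩
    simp only [mem_filter, mem_product, Finset.mem_image, Prod.exists]
    constructor
    · rintro ⟨⟨hx, hy⟩, hadj⟩
      exact ⟨y, x, ⟨⟨hy, hx⟩, G.adj_symm hadj⟩, rfl⟩
    · rintro ⟨a, b, ⟨⟨ha, hb⟩, hadj⟩, hswap⟩
      cases hswap
      exact ⟨⟨hb, ha⟩, G.adj_symm hadj⟩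
  rw [this, Finset.card_image_of_injective _ Prod.swap_injective]

lemma edens_comm (A B : Finset V) : edens G A B = edens G B A := by
  rw [edens, edens, epairs_comm, mul_comm]

lemma epairs_erase {A B : Finset V} {b : V} (hb : b ∈ B) :
    epairs G A B = (A.filter fun a => G.Adj a b).card + epairs G A (B.erase b) := by
  rw [epairs_eq_sum, epairs_eq_sum, ← Finset.add_sum_erase _ _ hb]

lemma epairs_shrink (A₀ : Finset V) :
    ∀ n (B₀ : Finset V), B₀.card = n → ∀ k, 1 ≤ k → k ≤ n →
      ∃ B' ⊆ B₀, B'.card = k ∧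
        (epairs G A₀ B' : ℝ) * n ≥ (epairs G A₀ B₀ : ℝ) * k := by
  intro n
  induction n with
  | zero => intro B₀ _ k hk1 hkn; omega
  | succ m ih =>
    intro B₀ hcard k hk1 hkn
    rcases eq_or_lt_of_le hkn with heq | hlt
    · exact ⟨B₀, Finset.Subset.refl _, by omega, by rw [heq]⟩
    · have hne : B₀.Nonempty := Finset.card_pos.mp (by omega)
      obtain ⟨b, hbB, hbmin⟩ := Finset.exists_min_image B₀
        (fun b => ((A₀.filter fun a => G.Adj a b).card : ℝ)) hne
      set d : ℝ := ((A₀.filter fun a => G.Adj a b).card : ℝ) with hd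
      have hsum : (epairs G A₀ B₀ : ℝ) = ∑ c ∈ B₀, ((A₀.filter fun a => G.Adj a c).card : ℝ) := by
        rw [epairs_eq_sum]; push_cast; ring
      have hmin : d * (m + 1) ≤ (epairs G A₀ B₀ : ℝ) := by
        rw [hsum]
        calc d * (m + 1) = ∑ _c ∈ B₀, d := by rw [Finset.sum_const, hcard]; push_cast; ring
        _ ≤ _ := Finset.sum_le_sum fun c hc => hbmin c hc
      have herase : (epairs G A₀ (B₀.erase b) : ℝ) = (epairs G A₀ B₀ : ℝ) - d := by
        rw [epairs_erase G hbB]; push_cast; ring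
      obtain ⟨B', hB'sub, hB'card, hB'⟩ := ih (B₀.erase b)
        (by rw [Finset.card_erase_of_mem hbB, hcard]; omega) k hk1 (by omega)
      refine ⟨B', hB'sub.trans (Finset.erase_subset _ _), hB'card, ?_⟩
      rw [herase] at hB'
      have hm : (1:ℝ) ≤ m := by exact_mod_cast Nat.one_le_iff_ne_zero.mpr (by omega)
      have hkm : (k:ℝ) ≤ m := by exact_mod_cast Nat.lt_succ_iff.mp hlt
      have hk0 : (1:ℝ) ≤ k := by exact_mod_cast hk1
      push_cast
      nlinarith [hB', hmin, Finset.card_filter_le A₀ (fun a => G.Adj a b)]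

lemma helper (A B A₀ B₀ : Finset V) (q γ : ℝ) (hγ : 0 < γ) (hA : A₀ ⊆ A) (hB : B₀ ⊆ B)
    (hAne : A₀.Nonempty) (hle : A₀.card ≤ B₀.card)
    (hviol : q * A₀.card * B₀.card + γ * A.card * B.card < (epairs G A₀ B₀ : ℝ)) :
    ∃ B' ⊆ B₀, B'.Nonempty ∧ B'.card = A₀.card ∧
      edens G A₀ B' ≥ q + γ * ((A.card : ℝ) / A₀.card) := by
  set k := A₀.card with hkdef
  have hk1 : 1 ≤ k := Finset.card_pos.mpr hAne
  obtain ⟨B', hB'sub, hB'card, hshr⟩ := epairs_shrink G A₀ B₀.card B₀ rfl k hk1 hle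
  refine ⟨B', hB'sub, Finset.card_pos.mp (by omega), hB'card, ?_⟩
  have hkR : (1:ℝ) ≤ k := by exact_mod_cast hk1
  have hnR : (k:ℝ) ≤ B₀.card := by exact_mod_cast hle
  have hAcard : (k:ℝ) ≤ A.card := by exact_mod_cast Finset.card_le_card hA
  have hBcard : ((B₀.card:ℝ)) ≤ B.card := by exact_mod_cast Finset.card_le_card hB
  have hkpos : (0:ℝ) < k := by linarith
  have hnpos : (0:ℝ) < (B₀.card:ℝ) := by linarith
  rw [edens, hB'card, ← hkdef, ge_iff_le, le_div_iff₀ (by positivity)]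
  have expand : (q + γ * ((A.card:ℝ) / k)) * ((k:ℝ) * k) = q*k*k + γ*(A.card:ℝ)*k := by
    field_simp
  rw [expand]
  have key : (q*(k:ℝ)*k + γ*(A.card:ℝ)*k) * B₀.card ≤ (epairs G A₀ B' : ℝ) * B₀.card := by
    nlinarith [hshr, mul_le_mul_of_nonneg_left hBcard
      (by positivity : (0:ℝ) ≤ γ * (A.card:ℝ) * k),
      mul_le_mul_of_nonneg_right (le_of_lt hviol) (by positivity : (0:ℝ) ≤ (k:ℝ))]
  exact le_of_mul_le_mul_right key hnpos

end Aux

theorem stmt_10 {V : Type*} [DecidableEq V] (G : SimpleGraph V) [DecidableRel G.Adj]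
    (A B : Finset V) (q γ : ℝ) (hγ : 0 < γ)
    (h : ¬ upperReg G A B q γ) :
    ∃ A' ⊆ A, ∃ B' ⊆ B, A'.Nonempty ∧ B'.Nonempty ∧ A'.card = B'.card ∧
      edens G A' B' ≥ q + γ * min ((A.card : ℝ) / A'.card) ((B.card : ℝ) / B'.card) := by
  unfold upperReg at h
  push_neg at h
  obtain ⟨A₀, hA₀sub, B₀, hB₀sub, hviol⟩ := h
  have hA₀ne : A₀.Nonempty := by
    rw [Finset.nonempty_iff_ne_empty]
    rintro rfl
    simp [epairs] at hviol
    exact absurd hviol (not_lt.mpr (by positivity))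
  have hB₀ne : B₀.Nonempty := by
    rw [Finset.nonempty_iff_ne_empty]
    rintro rfl
    simp [epairs] at hviol
    exact absurd hviol (not_lt.mpr (by positivity))
  rcases le_or_gt A₀.card B₀.card with hle | hlt
  · obtain ⟨B', hB'sub, hB'ne, hB'card, hdens⟩ :=
      helper G A B A₀ B₀ q γ hγ hA₀sub hB₀sub hA₀ne hle hviol
    refine ⟨A₀, hA₀sub, B', hB'sub.trans hB₀sub, hA₀ne, hB'ne, hB'card.symm, ?_⟩
    have hmin : min ((A.card : ℝ) / A₀.card) ((B.card : ℝ) / B'.card)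
        ≤ (A.card : ℝ) / A₀.card := min_le_left _ _
    nlinarith [mul_le_mul_of_nonneg_left hmin hγ.le]
  · have hviol' : q * B₀.card * A₀.card + γ * B.card * A.card < (epairs G B₀ A₀ : ℝ) := by
      rw [epairs_comm]
      calc q * (B₀.card:ℝ) * A₀.card + γ * B.card * A.card
          = q * A₀.card * B₀.card + γ * A.card * B.card := by ring
        _ < _ := hviol
    obtain ⟨A', hA'sub, hA'ne, hA'card, hdens⟩ :=
      helper G B A B₀ A₀ q γ hγ hB₀sub hA₀sub hB₀ne hlt.le hviol'
    refine ⟨A', hA'sub.trans hA₀sub, B₀, hB₀sub, hA'ne, hB₀ne, hA'card, ?_⟩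
    rw [edens_comm]
    have hmin : min ((A.card : ℝ) / A'.card) ((B.card : ℝ) / B₀.card)
        ≤ (B.card : ℝ) / B₀.card := min_le_right _ _
    nlinarith [mul_le_mul_of_nonneg_left hmin hγ.le]
end

section
/- Let H be a graph on r vertices, G a graph on n vertices, and for subsets U ⊆ V(G) let N_H(U) be the number of labeled copies of H in G with all vertices in U. If G satisfies P*_{H,p}(ε), i.e., |N_H(U) − p^m|U|^r| ≤ εn^r for all U, then for all disjoint V_1,...,V_r ⊆ V(G), the number of labeled copies of H with exactly one vertex in each V_i is within (2^r − 1)εn^r of p^m·r!·Π_{i=1}^r |V_i|. -/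
/-! For `S ⊆ [r]`, the signs `(-1) ^ (r - |S|)` sieve out every map `[r] → [r]` that is not
surjective: `∑_S (-1) ^ (r - |S|) [im c ⊆ S] = [c surjective]`. Applied to the vertex classes
of a copy of `H` inside `⋃_{i ∈ S} V_i` this leaves exactly the copies meeting each `V_i` once,
and applied to the expansion of `(∑_{i ∈ S} |V_i|) ^ r` it leaves `r! ∏ |V_i|`. So the error is
a signed sum of the deviations `N_H(U) - p^m |U|^r` over `U = ⋃_{i ∈ S} V_i`; the term `S = ∅`
vanishes and the other `2^r - 1` are each at most `ε n^r`. -/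

open Finset

/-- Number of labeled copies of `H` in `G` with all vertices in `U`. -/
noncomputable def labCopies {V : Type*} [Fintype V] (G : SimpleGraph V) (r : ℕ)
    (H : SimpleGraph (Fin r)) (U : Finset V) : ℕ :=
  Nat.card {f : Fin r → V // Function.Injective f ∧ (∀ i, f i ∈ U) ∧
    ∀ i j, H.Adj i j → G.Adj (f i) (f j)}

/-- Number of labeled copies of `H` in `G` with exactly one vertex in each `Vs i`. -/
noncomputable def labCopiesTrans {V : Type*} [Fintype V] (G : SimpleGraph V) (r : ℕ)
    (H : SimpleGraph (Fin r)) (Vs : Fin r → Finset V) : ℕ :=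
  Nat.card {f : Fin r → V // Function.Injective f ∧
    (∀ i j, H.Adj i j → G.Adj (f i) (f j)) ∧
    ∃ σ : Equiv.Perm (Fin r), ∀ i, f i ∈ Vs (σ i)}

open Function

section AlternatingSums

variable {ι κ R : Type*} [Fintype ι] [DecidableEq ι] [CommRing R]

theorem sum_neg_one_pow_card_compl_of_subset (T : Finset ι) :
    ∑ S : Finset ι, (if T ⊆ S then (-1 : R) ^ #Sᶜ else 0) = if T = univ then 1 else 0 := by
  have hcompl : ∑ S : Finset ι, (if T ⊆ S then (-1 : R) ^ #Sᶜ else 0)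
      = ∑ S ∈ Tᶜ.powerset, (-1 : R) ^ #S := by
    rw [← sum_filter]
    exact sum_nbij' compl compl (by simp)
      (fun S hS => by simpa using subset_compl_comm.mp (mem_powerset.mp hS)) (by simp) (by simp)
      (by simp)
  simp_rw [hcompl, ← compl_eq_empty_iff]
  exact_mod_cast congrArg (Int.cast (R := R)) sum_powerset_neg_one_pow_card

theorem sum_neg_one_pow_card_compl_of_forall_mem [Fintype κ] (c : κ → ι) :
    ∑ S : Finset ι, (if ∀ k, c k ∈ S then (-1 : R) ^ #Sᶜ else 0)
      = if Surjective c then 1 else 0 := by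
  have h := sum_neg_one_pow_card_compl_of_subset (R := R) (univ.image c)
  simp only [image_subset_iff, mem_univ, forall_const] at h
  simpa [← coe_eq_univ, Set.range_eq_univ] using h

theorem sum_neg_one_pow_card_compl_mul_sum_pow (x : ι → R) :
    ∑ S : Finset ι, (-1) ^ #Sᶜ * (∑ i ∈ S, x i) ^ Fintype.card ι
      = (Fintype.card ι).factorial * ∏ i, x i := by
  have hexpand (S : Finset ι) : (∑ i ∈ S, x i) ^ Fintype.card ι =
      ∑ c : ι → ι, if ∀ k, c k ∈ S then ∏ k, x (c k) else 0 := by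
    rw [← card_univ, ← prod_const, prod_univ_sum, ← sum_filter]
    congr 1
    ext c
    simp
  calc ∑ S : Finset ι, (-1) ^ #Sᶜ * (∑ i ∈ S, x i) ^ Fintype.card ι
      = ∑ c : ι → ι, (∑ S : Finset ι, if ∀ k, c k ∈ S then (-1 : R) ^ #Sᶜ else 0)
          * ∏ k, x (c k) := by
        simp_rw [hexpand, mul_sum, sum_mul, mul_ite, ite_mul, mul_zero, zero_mul]
        exact sum_comm
    _ = ∑ c : ι → ι, if Bijective c then ∏ k, x (c k) else 0 := by
        simp_rw [sum_neg_one_pow_card_compl_of_forall_mem, ← Finite.surjective_iff_bijective,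
          boole_mul]
    _ = ∑ σ : Equiv.Perm ι, ∏ k, x (σ k) := by
        rw [← sum_filter, sum_subtype _ (p := Bijective) (by simp)]
        exact Fintype.sum_equiv Equiv.bijectiveEquiv _ _ (fun _ => rfl)
    _ = (Fintype.card ι).factorial * ∏ i, x i := by
        simp [Equiv.prod_comp, Fintype.card_perm]

theorem abs_sum_neg_one_pow_card_compl_mul_le {D : Finset ι → ℝ} {B : ℝ} (h0 : D ∅ = 0)
    (hD : ∀ S, |D S| ≤ B) :
    |∑ S : Finset ι, (-1) ^ #Sᶜ * D S| ≤ (2 ^ Fintype.card ι - 1) * B := by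
  rw [← sum_erase univ (a := ∅) (by simp [h0])]
  calc |∑ S ∈ univ.erase ∅, (-1) ^ #Sᶜ * D S|
      ≤ ∑ S ∈ univ.erase ∅, |(-1) ^ #Sᶜ * D S| := abs_sum_le_sum_abs _ _
    _ ≤ ∑ S ∈ univ.erase ∅, B := sum_le_sum fun S _ => by simpa using hD S
    _ = (2 ^ Fintype.card ι - 1) * B := by
        simp [card_erase_of_mem, Fintype.card_finset]

variable {V : Type*} [DecidableEq V] {Vs : ι → Finset V}

theorem sum_neg_one_pow_card_compl_of_forall_mem_biUnion (hVs : Pairwise (Disjoint on Vs))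
    (f : ι → V) :
    ∑ S : Finset ι, (if ∀ i, f i ∈ S.biUnion Vs then (-1 : R) ^ #Sᶜ else 0)
      = if ∃ σ : Equiv.Perm ι, ∀ i, f i ∈ Vs (σ i) then 1 else 0 := by
  by_cases hcov : ∀ i, ∃ j, f i ∈ Vs j
  · choose c hc using hcov
    have hc_unique {i j} (hj : f i ∈ Vs j) : j = c i := by
      by_contra hne
      exact disjoint_left.mp (hVs hne) hj (hc i)
    have hmem (S : Finset ι) : (∀ i, f i ∈ S.biUnion Vs) ↔ ∀ i, c i ∈ S := by
      simp only [mem_biUnion]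
      exact forall_congr' fun i =>
        ⟨fun ⟨j, hjS, hj⟩ => hc_unique hj ▸ hjS, fun hi => ⟨c i, hi, hc i⟩⟩
    have hperm : (∃ σ : Equiv.Perm ι, ∀ i, f i ∈ Vs (σ i)) ↔ Surjective c := by
      refine ⟨fun ⟨σ, hσ⟩ => ?_, fun hsurj => ?_⟩
      · have : ⇑σ = c := funext fun i => hc_unique (hσ i)
        exact this ▸ σ.surjective
      · exact ⟨.ofBijective c (Finite.surjective_iff_bijective.mp hsurj), hc⟩
    simp_rw [hmem, hperm]
    exact sum_neg_one_pow_card_compl_of_forall_mem c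
  · push Not at hcov
    obtain ⟨i, hi⟩ := hcov
    rw [if_neg fun ⟨σ, hσ⟩ => hi (σ i) (hσ i)]
    refine sum_eq_zero fun S _ => if_neg fun hS => ?_
    obtain ⟨j, -, hj⟩ := mem_biUnion.mp (hS i)
    exact hi j hj

theorem card_filter_exists_perm_eq_sum (hVs : Pairwise (Disjoint on Vs)) (C : Finset (ι → V)) :
    (#{f ∈ C | ∃ σ : Equiv.Perm ι, ∀ i, f i ∈ Vs (σ i)} : R)
      = ∑ S : Finset ι, (-1 : R) ^ #Sᶜ * #{f ∈ C | ∀ i, f i ∈ S.biUnion Vs} := by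
  simp_rw [natCast_card_filter, mul_sum, mul_boole]
  rw [sum_comm]
  exact sum_congr rfl fun f _ => (sum_neg_one_pow_card_compl_of_forall_mem_biUnion hVs f).symm

end AlternatingSums

section LabeledCopies

variable {V : Type*} [Fintype V] (G : SimpleGraph V) {r : ℕ} (H : SimpleGraph (Fin r))

open Classical in
noncomputable def labeledCopies : Finset (Fin r → V) :=
  {f | Injective f ∧ ∀ i j, H.Adj i j → G.Adj (f i) (f j)}

theorem labCopies_eq_card_filter [DecidableEq V] (U : Finset V) :
    labCopies G r H U = #{f ∈ labeledCopies G H | ∀ i, f i ∈ U} := by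
  classical
  rw [labCopies, Nat.card_eq_fintype_card, Fintype.card_subtype, labeledCopies, filter_filter]
  congr 1
  ext f
  simp only [mem_filter, mem_univ, true_and]
  tauto

theorem labCopiesTrans_eq_card_filter [DecidableEq V] (Vs : Fin r → Finset V) :
    labCopiesTrans G r H Vs
      = #{f ∈ labeledCopies G H | ∃ σ : Equiv.Perm (Fin r), ∀ i, f i ∈ Vs (σ i)} := by
  classical
  rw [labCopiesTrans, Nat.card_eq_fintype_card, Fintype.card_subtype, labeledCopies,
    filter_filter]
  congr 1
  ext f
  simp only [mem_filter, mem_univ, true_and, and_assoc]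

theorem labCopies_empty : labCopies G r H ∅ = 0 ^ r := by
  cases r with
  | zero => simp [labCopies, Nat.card_eq_fintype_card, Injective]
  | succ r =>
    rw [labCopies, zero_pow r.succ_ne_zero, Nat.card_eq_zero]
    exact .inl ⟨fun f => notMem_empty _ (f.2.2.1 0)⟩

theorem labCopiesTrans_eq_sum [DecidableEq V] {R : Type*} [CommRing R] {Vs : Fin r → Finset V}
    (hVs : Pairwise (Disjoint on Vs)) :
    (labCopiesTrans G r H Vs : R)
      = ∑ S : Finset (Fin r), (-1 : R) ^ #Sᶜ * labCopies G r H (S.biUnion Vs) := by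
  simp only [labCopiesTrans_eq_card_filter, labCopies_eq_card_filter]
  convert card_filter_exists_perm_eq_sum hVs (labeledCopies G H)

end LabeledCopies

theorem stmt_12_general {V : Type*} [Fintype V] (G : SimpleGraph V)
    (r m : ℕ) (H : SimpleGraph (Fin r)) [DecidableRel H.Adj]
    (hm : m = H.edgeFinset.card)
    (p ε : ℝ)
    (n : ℕ)
    (hyp : ∀ U : Finset V,
      |(labCopies G r H U : ℝ) - p ^ m * (U.card : ℝ) ^ r| ≤ ε * n ^ r)
    (Vs : Fin r → Finset V)
    (hdisj : ∀ i j, i ≠ j → Disjoint (Vs i) (Vs j)) :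
    |(labCopiesTrans G r H Vs : ℝ)
        - p ^ m * (Nat.factorial r : ℝ) * ∏ i, ((Vs i).card : ℝ)|
      ≤ (2 ^ r - 1) * ε * n ^ r := by
  classical
  have hVs : Pairwise (Disjoint on Vs) := fun i j h => hdisj i j h
  set D : Finset V → ℝ := fun U => labCopies G r H U - p ^ m * #U ^ r
  have hpoly := sum_neg_one_pow_card_compl_mul_sum_pow fun i => (#(Vs i) : ℝ)
  rw [Fintype.card_fin] at hpoly
  have hsum : (labCopiesTrans G r H Vs : ℝ) - p ^ m * r.factorial * ∏ i, (#(Vs i) : ℝ)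
      = ∑ S : Finset (Fin r), (-1) ^ #Sᶜ * D (S.biUnion Vs) := by
    rw [labCopiesTrans_eq_sum G H hVs, mul_assoc, ← hpoly, mul_sum, ← sum_sub_distrib]
    refine sum_congr rfl fun S _ => ?_
    simp only [D, card_biUnion fun i _ j _ h => hVs h]
    push_cast
    ring
  have hD_empty : D ∅ = 0 := by
    rcases r.eq_zero_or_pos with rfl | hr
    · have : m = 0 := by simp [hm, Subsingleton.elim H ⊥]
      simp [D, labCopies_empty, this]
    · simp [D, labCopies_empty, zero_pow hr.ne']
  rw [hsum]
  calc |∑ S : Finset (Fin r), (-1) ^ #Sᶜ * D (S.biUnion Vs)|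
      ≤ (2 ^ Fintype.card (Fin r) - 1) * (ε * n ^ r) :=
        abs_sum_neg_one_pow_card_compl_mul_le (by simpa using hD_empty) fun S => hyp _
    _ = (2 ^ r - 1) * ε * n ^ r := by rw [Fintype.card_fin, mul_assoc]

theorem stmt_12 {V : Type*} [Fintype V] (G : SimpleGraph V)
    (r m : ℕ) (H : SimpleGraph (Fin r)) [DecidableRel H.Adj]
    (hm : m = H.edgeFinset.card)
    (p ε : ℝ) (hp : 0 < p) (hp1 : p < 1)
    (n : ℕ) (hn : n = Fintype.card V)
    (hyp : ∀ U : Finset V,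
      |(labCopies G r H U : ℝ) - p ^ m * (U.card : ℝ) ^ r| ≤ ε * n ^ r)
    (Vs : Fin r → Finset V)
    (hdisj : ∀ i j, i ≠ j → Disjoint (Vs i) (Vs j)) :
    |(labCopiesTrans G r H Vs : ℝ)
        - p ^ m * (Nat.factorial r : ℝ) * ∏ i, ((Vs i).card : ℝ)|
      ≤ (2 ^ r - 1) * ε * n ^ r :=
  stmt_12_general G r m H hm p ε n hyp Vs hdisj
end

section
/- Let G be the weighted graph on two vertices with loop weights p − ε and crossing edge weight p + ε, and let H be a bipartite graph of girth g with edge set E. For a uniformly random map φ : V(H) → {1,2}, define X_e = 1 if φ maps the endpoints of e to different vertices and X_e = −1 otherwise. Then for any set of k < g edges e_1,...,e_k of H, E[X_{e_1}···X_{e_k}] = E[X_{e_1}]···E[X_{e_k}] = 0 when k ≥ 1, and consequently the homomorphism density E[Π_{e∈E}(p + X_e ε)] equals p^m + O(ε^g) where m = |E|. -/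
open Finset

/-- `edgeSign φ e` is `1` if the endpoints of `e` receive different labels under `φ`,
and `-1` otherwise. -/
def edgeSign {V : Type*} (φ : V → Fin 2) : Sym2 V → ℝ :=
  Sym2.lift ⟨fun u v => if φ u = φ v then (-1 : ℝ) else 1,
    fun u v => by simp [eq_comm]⟩

namespace Stmt16Aux

open SimpleGraph

variable {V : Type*}

lemma edgeSign_mk (φ : V → Fin 2) (u v : V) :
    edgeSign φ s(u, v) = if φ u = φ v then (-1 : ℝ) else 1 := rfl

lemma abs_edgeSign (φ : V → Fin 2) (e : Sym2 V) : |edgeSign φ e| = 1 := by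
  induction e using Sym2.ind with
  | _ u v =>
    rw [edgeSign_mk]
    split <;> simp

lemma fin2_add_one_add_one (x : Fin 2) : x + 1 + 1 = x := by revert x; decide

lemma fin2_add_one_ne (x : Fin 2) : x + 1 ≠ x := by revert x; decide

lemma fin2_add_one_eq_of_ne {x y : Fin 2} (h : x ≠ y) : x + 1 = y := by
  revert h; revert x y; decide

lemma edgeSign_update_not_mem [DecidableEq V] (φ : V → Fin 2) (b : V) (t : Fin 2)
    (e : Sym2 V) (hb : b ∉ e) :
    edgeSign (Function.update φ b t) e = edgeSign φ e := by
  induction e using Sym2.ind with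
  | _ u v =>
    rw [Sym2.mem_iff] at hb
    push_neg at hb
    rw [edgeSign_mk, edgeSign_mk, Function.update_of_ne (fun h => hb.1 h.symm),
      Function.update_of_ne (fun h => hb.2 h.symm)]

/-- In a finite acyclic graph with at least one edge there is a vertex with a unique
neighbour. -/
lemma exists_unique_nbr [Fintype V] (G' : SimpleGraph V) (hA : G'.IsAcyclic)
    {a₀ b₀ : V} (hab : G'.Adj a₀ b₀) :
    ∃ u c, G'.Adj u c ∧ ∀ x, G'.Adj u x → x = c := by
  classical
  set N := Fintype.card V with hN
  set P : ℕ → Prop := fun k => ∃ (x y : V) (w : G'.Walk x y), w.IsPath ∧ w.length = k with hP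
  have hP1 : P 1 := ⟨a₀, b₀, Walk.cons hab Walk.nil,
    by simp [Walk.cons_isPath_iff, hab.ne], rfl⟩
  have hPlt : ∀ k, P k → k < N := by
    rintro k ⟨x, y, w, hw, rfl⟩
    exact hw.length_lt
  have h1N : 1 ≤ N := le_of_lt (hPlt 1 hP1)
  set n := Nat.findGreatest P N with hn
  have hPn : P n := Nat.findGreatest_spec h1N hP1
  have hmax : ∀ k, P k → k ≤ n := by
    intro k hk
    by_contra hlt
    push_neg at hlt
    exact Nat.findGreatest_is_greatest hlt (le_of_lt (hPlt k hk)) hk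
  have hn1 : 1 ≤ n := Nat.le_findGreatest h1N hP1
  obtain ⟨x, y, w, hw, hlen⟩ := hPn
  cases w with
  | nil => simp at hlen; omega
  | @cons _ c _ hadj q =>
    have hw' := hw
    rw [Walk.cons_isPath_iff] at hw
    refine ⟨x, c, hadj, ?_⟩
    intro z hz
    by_contra hzc
    by_cases hzs : z ∈ q.support
    · -- build a cycle, contradiction with acyclicity
      have hr : (q.takeUntil z hzs).IsPath := hw.1.takeUntil hzs
      have hxr : x ∉ (q.takeUntil z hzs).support :=
        fun h => hw.2 (Walk.support_takeUntil_subset q hzs h)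
      have hp : (Walk.cons hadj (q.takeUntil z hzs)).IsPath :=
        (Walk.cons_isPath_iff _ _).2 ⟨hr, hxr⟩
      have hcyc : (Walk.cons hz.symm (Walk.cons hadj (q.takeUntil z hzs))).IsCycle := by
        rw [Walk.cons_isCycle_iff]
        refine ⟨hp, ?_⟩
        simp only [Walk.edges_cons, List.mem_cons]
        rintro (h | h)
        · rw [Sym2.eq_iff] at h
          rcases h with ⟨h1, h2⟩ | ⟨h1, h2⟩
          · exact hz.ne h1.symm
          · exact hzc h1
        · rw [Sym2.eq_swap] at h
          exact hxr ((q.takeUntil z hzs).fst_mem_support_of_mem_edges h)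
      exact hA _ hcyc
    · -- extend the path, contradiction with maximality
      have hz' : z ∉ (Walk.cons hadj q).support := by
        rw [Walk.support_cons, List.mem_cons]
        rintro (h | h)
        · exact hz.ne h.symm
        · exact hzs h
      have hext : (Walk.cons hz.symm (Walk.cons hadj q)).IsPath :=
        (Walk.cons_isPath_iff _ _).2 ⟨hw', hz'⟩
      have : P (n + 1) := ⟨z, y, _, hext, by rw [Walk.length_cons, hlen]⟩
      have := hmax _ this
      omega

lemma sum_prod_edgeSign_eq_zero [Fintype V] [DecidableEq V] (H : SimpleGraph V)
    [DecidableRel H.Adj] {g : ℕ} (hg : H.girth = g)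
    (F : Finset (Sym2 V)) (hFE : F ⊆ H.edgeFinset) (h1 : 1 ≤ F.card) (h2 : F.card < g) :
    (∑ φ : V → Fin 2, ∏ e ∈ F, edgeSign φ e) = 0 := by
  classical
  set G' : SimpleGraph V := SimpleGraph.fromEdgeSet ↑F with hG'
  have hle : G' ≤ H := by
    intro u v huv
    rw [hG', SimpleGraph.fromEdgeSet_adj] at huv
    exact (SimpleGraph.mem_edgeSet H).mp (SimpleGraph.mem_edgeFinset.mp (hFE huv.1))
  have hA : G'.IsAcyclic := by
    intro v c hc
    have hc' : (c.mapLe hle).IsCycle := hc.mapLe hle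
    have hHnA : ¬ H.IsAcyclic := fun h => h _ hc'
    have hne : H.egirth ≠ ⊤ := by rwa [ne_eq, SimpleGraph.egirth_eq_top]
    have hge : H.egirth = (g : ℕ∞) := by
      rw [← hg, SimpleGraph.girth, ENat.coe_toNat hne]
    have hlen : (g : ℕ∞) ≤ (c.length : ℕ∞) := by
      rw [← hge]
      have : H.egirth ≤ ((c.mapLe hle).length : ℕ∞) :=
        iInf_le_of_le v (iInf_le_of_le (c.mapLe hle) (iInf_le_of_le hc' le_rfl))
      simpa using this
    have hsub : c.edges.toFinset ⊆ F := by
      intro e he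
      rw [List.mem_toFinset] at he
      have := c.edges_subset_edgeSet he
      rw [hG', SimpleGraph.edgeSet_fromEdgeSet] at this
      exact this.1
    have hnd : c.edges.Nodup := hc.isCircuit.isTrail.edges_nodup
    have hcard : c.length ≤ F.card := by
      have := Finset.card_le_card hsub
      rwa [List.toFinset_card_of_nodup hnd, Walk.length_edges] at this
    have : (g : ℕ∞) ≤ (F.card : ℕ∞) := le_trans hlen (by exact_mod_cast hcard)
    exact absurd (by exact_mod_cast this) (not_le.mpr h2)
  -- get an edge of F
  obtain ⟨e0, he0⟩ := Finset.card_pos.mp h1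
  have hnd0 : ¬ e0.IsDiag := H.not_isDiag_of_mem_edgeSet (SimpleGraph.mem_edgeFinset.mp (hFE he0))
  obtain ⟨a, b, rfl⟩ : ∃ a b, e0 = s(a, b) := by
    induction e0 using Sym2.ind with
    | _ a b => exact ⟨a, b, rfl⟩
  have hab : G'.Adj a b := by
    rw [hG', SimpleGraph.fromEdgeSet_adj]
    exact ⟨he0, fun h => hnd0 (by simp [h])⟩
  obtain ⟨u, c, huc, hun⟩ := exists_unique_nbr G' hA hab
  have huc' : s(u, c) ∈ F := by
    rw [hG', SimpleGraph.fromEdgeSet_adj] at huc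
    exact huc.1
  have huniq : ∀ e ∈ F, u ∈ e → e = s(u, c) := by
    intro e heF hue
    induction e using Sym2.ind with
    | _ p q =>
      have hpq : p ≠ q := by
        intro h
        exact H.not_isDiag_of_mem_edgeSet (SimpleGraph.mem_edgeFinset.mp (hFE heF)) (by simp [h])
      rw [Sym2.mem_iff] at hue
      rcases hue with rfl | rfl
      · have : G'.Adj u q := by
          rw [hG', SimpleGraph.fromEdgeSet_adj]; exact ⟨heF, hpq⟩
        rw [hun q this]
      · have : G'.Adj u p := by
          rw [hG', SimpleGraph.fromEdgeSet_adj]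
          exact ⟨by rwa [Sym2.eq_swap], fun h => hpq h.symm⟩
        rw [hun p this, Sym2.eq_swap]
  -- the sign-flipping involution at u
  set σ : (V → Fin 2) → (V → Fin 2) := fun φ => Function.update φ u (φ u + 1) with hσ
  have hinv : Function.Involutive σ := by
    intro φ
    funext v
    by_cases hv : v = u
    · subst hv
      simp [hσ, Function.update_self, fin2_add_one_add_one]
    · simp [hσ, Function.update_of_ne hv]
  have hflip : ∀ φ : V → Fin 2,
      (∏ e ∈ F, edgeSign (σ φ) e) = -∏ e ∈ F, edgeSign φ e := by
    intro φ
    rw [← Finset.mul_prod_erase F (fun e => edgeSign (σ φ) e) huc',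
      ← Finset.mul_prod_erase F (fun e => edgeSign φ e) huc']
    have hrest : (∏ e ∈ F.erase s(u, c), edgeSign (σ φ) e)
        = ∏ e ∈ F.erase s(u, c), edgeSign φ e := by
      refine Finset.prod_congr rfl fun e he => ?_
      rw [Finset.mem_erase] at he
      refine edgeSign_update_not_mem φ u _ e fun hue => he.1 (huniq e he.2 hue)
    rw [hrest]
    have hcu : c ≠ u := huc.ne'
    have hhead : edgeSign (σ φ) s(u, c) = -edgeSign φ s(u, c) := by
      rw [edgeSign_mk, edgeSign_mk]
      have h1 : σ φ u = φ u + 1 := by simp [hσ, Function.update_self]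
      have h2 : σ φ c = φ c := by simp [hσ, Function.update_of_ne hcu]
      rw [h1, h2]
      by_cases h : φ u = φ c
      · rw [if_pos h, if_neg (fun hc => fin2_add_one_ne (φ u) (by rw [hc, h]))]
        try norm_num
      · rw [if_neg h, if_pos (fin2_add_one_eq_of_ne h)]
        try norm_num
    rw [hhead]
    ring
  have hsum : (∑ φ : V → Fin 2, ∏ e ∈ F, edgeSign φ e)
      = ∑ φ : V → Fin 2, ∏ e ∈ F, edgeSign (σ φ) e :=
    (Equiv.sum_comp hinv.toPerm (fun φ => ∏ e ∈ F, edgeSign φ e)).symm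
  simp_rw [hflip] at hsum
  rw [Finset.sum_neg_distrib] at hsum
  linarith

end Stmt16Aux

theorem stmt_16 {V : Type*} [Fintype V] [DecidableEq V] (H : SimpleGraph V)
    [DecidableRel H.Adj] (hbip : H.Colorable 2)
    (g m : ℕ) (hg : H.girth = (g : ℕ∞)) (hm : m = H.edgeFinset.card)
    (p : ℝ) (hp : 0 < p) (hp1 : p < 1) :
    (∀ F ⊆ H.edgeFinset, 1 ≤ F.card → F.card < g →
      (∑ φ : V → Fin 2, ∏ e ∈ F, edgeSign φ e) / 2 ^ (Fintype.card V) = 0) ∧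
    ∃ C : ℝ, 0 ≤ C ∧ ∀ ε : ℝ, |ε| ≤ 1 →
      |(∑ φ : V → Fin 2, ∏ e ∈ H.edgeFinset, (p + edgeSign φ e * ε)) /
          2 ^ (Fintype.card V) - p ^ m| ≤ C * |ε| ^ g := by
  classical
  have hgn : H.girth = g := by exact_mod_cast hg
  have part1 : ∀ F ⊆ H.edgeFinset, 1 ≤ F.card → F.card < g →
      (∑ φ : V → Fin 2, ∏ e ∈ F, edgeSign φ e) = 0 :=
    fun F hF h1 h2 => Stmt16Aux.sum_prod_edgeSign_eq_zero H hgn F hF h1 h2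
  refine ⟨fun F hF h1 h2 => by rw [part1 F hF h1 h2, zero_div], ?_⟩
  refine ⟨2 ^ m, by positivity, ?_⟩
  intro ε hε
  set n := Fintype.card V with hn
  have h2n : (0 : ℝ) < 2 ^ n := by positivity
  have hcardfun : (Finset.univ : Finset (V → Fin 2)).card = 2 ^ n := by
    rw [Finset.card_univ, Fintype.card_fun]
    simp [hn]
  set E := H.edgeFinset with hE
  have hexp : ∀ φ : V → Fin 2, (∏ e ∈ E, (p + edgeSign φ e * ε))
      = ∑ F ∈ E.powerset, (∏ e ∈ F, edgeSign φ e) * ε ^ F.card * p ^ (E \ F).card := by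
    intro φ
    calc (∏ e ∈ E, (p + edgeSign φ e * ε))
        = ∏ e ∈ E, (edgeSign φ e * ε + p) :=
          Finset.prod_congr rfl fun e _ => add_comm _ _
      _ = ∑ F ∈ E.powerset, (∏ e ∈ F, edgeSign φ e * ε) * ∏ _e ∈ E \ F, p :=
          Finset.prod_add _ _ _
      _ = _ := by
          refine Finset.sum_congr rfl fun F _ => ?_
          rw [Finset.prod_mul_distrib, Finset.prod_const, Finset.prod_const]
  have hswap : (∑ φ : V → Fin 2, ∏ e ∈ E, (p + edgeSign φ e * ε))
      = ∑ F ∈ E.powerset, (∑ φ : V → Fin 2, ∏ e ∈ F, edgeSign φ e) * ε ^ F.card * p ^ (E \ F).card := by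
    simp_rw [hexp]
    rw [Finset.sum_comm]
    refine Finset.sum_congr rfl fun F _ => ?_
    rw [← Finset.sum_mul, ← Finset.sum_mul]
  have hempty : (∑ φ : V → Fin 2, ∏ e ∈ (∅ : Finset (Sym2 V)), edgeSign φ e)
      * ε ^ (∅ : Finset (Sym2 V)).card * p ^ (E \ (∅ : Finset (Sym2 V))).card
      = 2 ^ n * p ^ m := by
    have h1 : (∑ φ : V → Fin 2, ∏ e ∈ (∅ : Finset (Sym2 V)), edgeSign φ e) = 2 ^ n := by
      simp only [Finset.prod_empty]
      rw [Finset.sum_const, hcardfun]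
      simp
    rw [h1, Finset.card_empty, pow_zero, mul_one, Finset.sdiff_empty, hm]
  have hsplit : (∑ φ : V → Fin 2, ∏ e ∈ E, (p + edgeSign φ e * ε))
      = 2 ^ n * p ^ m + ∑ F ∈ E.powerset.erase ∅,
        (∑ φ : V → Fin 2, ∏ e ∈ F, edgeSign φ e) * ε ^ F.card * p ^ (E \ F).card := by
    rw [hswap, ← Finset.add_sum_erase E.powerset _ (Finset.empty_mem_powerset E), hempty]
  set T := ∑ F ∈ E.powerset.erase ∅,
    (∑ φ : V → Fin 2, ∏ e ∈ F, edgeSign φ e) * ε ^ F.card * p ^ (E \ F).card with hT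
  have hgoal : (∑ φ : V → Fin 2, ∏ e ∈ E, (p + edgeSign φ e * ε)) / 2 ^ n - p ^ m
      = T / 2 ^ n := by
    rw [hsplit]
    field_simp
    ring
  -- bound each term
  have hterm : ∀ F ∈ E.powerset.erase ∅,
      |(∑ φ : V → Fin 2, ∏ e ∈ F, edgeSign φ e) * ε ^ F.card * p ^ (E \ F).card|
        ≤ 2 ^ n * |ε| ^ g := by
    intro F hF
    rw [Finset.mem_erase, Finset.mem_powerset] at hF
    have hFcard : 1 ≤ F.card := Finset.card_pos.mpr (Finset.nonempty_of_ne_empty hF.1)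
    by_cases hlt : F.card < g
    · rw [part1 F hF.2 hFcard hlt]
      simp only [zero_mul, abs_zero]
      positivity
    · push_neg at hlt
      have hAbound : |∑ φ : V → Fin 2, ∏ e ∈ F, edgeSign φ e| ≤ 2 ^ n := by
        calc |∑ φ : V → Fin 2, ∏ e ∈ F, edgeSign φ e|
            ≤ ∑ φ : V → Fin 2, |∏ e ∈ F, edgeSign φ e| := Finset.abs_sum_le_sum_abs _ _
          _ = ∑ _φ : V → Fin 2, (1 : ℝ) := by
              refine Finset.sum_congr rfl fun φ _ => ?_
              rw [Finset.abs_prod]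
              calc (∏ e ∈ F, |edgeSign φ e|) = ∏ e ∈ F, (1 : ℝ) :=
                    Finset.prod_congr rfl fun e _ => Stmt16Aux.abs_edgeSign φ e
                _ = 1 := Finset.prod_const_one
          _ = 2 ^ n := by rw [Finset.sum_const, hcardfun]; simp
      have hεpow : |ε| ^ F.card ≤ |ε| ^ g :=
        pow_le_pow_of_le_one (abs_nonneg ε) hε hlt
      have hppow : p ^ (E \ F).card ≤ 1 := pow_le_one₀ hp.le hp1.le
      calc |(∑ φ : V → Fin 2, ∏ e ∈ F, edgeSign φ e) * ε ^ F.card * p ^ (E \ F).card|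
          = |∑ φ : V → Fin 2, ∏ e ∈ F, edgeSign φ e| * |ε| ^ F.card * p ^ (E \ F).card := by
            rw [abs_mul, abs_mul, abs_pow, abs_pow, abs_of_pos hp]
        _ ≤ 2 ^ n * |ε| ^ g * 1 := by
            refine mul_le_mul (mul_le_mul hAbound hεpow (by positivity) (by positivity))
              hppow (by positivity) (by positivity)
        _ = 2 ^ n * |ε| ^ g := by ring
  have hTbound : |T| ≤ 2 ^ m * (2 ^ n * |ε| ^ g) := by
    calc |T| ≤ ∑ F ∈ E.powerset.erase ∅,
          |(∑ φ : V → Fin 2, ∏ e ∈ F, edgeSign φ e) * ε ^ F.card * p ^ (E \ F).card| :=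
          Finset.abs_sum_le_sum_abs _ _
      _ ≤ ∑ _F ∈ E.powerset.erase ∅, (2 ^ n * |ε| ^ g) := Finset.sum_le_sum hterm
      _ = (E.powerset.erase ∅).card • (2 ^ n * |ε| ^ g) := Finset.sum_const _
      _ ≤ 2 ^ m * (2 ^ n * |ε| ^ g) := by
          rw [nsmul_eq_mul]
          refine mul_le_mul_of_nonneg_right ?_ (by positivity)
          calc ((E.powerset.erase ∅).card : ℝ) ≤ (E.powerset.card : ℝ) := by
                exact_mod_cast Finset.card_le_card (Finset.erase_subset _ _)
            _ = 2 ^ m := by rw [Finset.card_powerset, ← hm]; push_cast; ring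
  rw [hgoal, abs_div, abs_of_pos h2n, div_le_iff₀ h2n]
  calc |T| ≤ 2 ^ m * (2 ^ n * |ε| ^ g) := hTbound
    _ = 2 ^ m * |ε| ^ g * 2 ^ n := by ring
end

section
/- Let G be a graph on n vertices and q = e(G)/C(n,2) its edge density. Suppose there is a subset S ⊆ V(G) with |e(S) − q·C(|S|,2)| ≥ D. Then for n sufficiently large there exists a subset S' of exactly ⌊n/2⌋ vertices with |e(S') − q·C(|S'|,2)| ≥ D/8. -/
/-!
Twice the discrepancy `e(X) - q·C(|X|,2)` is the sum `P(X)` over ordered pairs `(u, v)` of `X` of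
the weight `1[uv ∈ E] - q·1[u ≠ v]`, and the choice of `q` makes `P(V) = 0`. For a uniformly
random `k`-subset `B` of a `t`-set `T`, `C(t,2)·𝔼 P(B) = C(k,2)·P(T)`, and, when `S` is disjoint
from `T` with `P(S ∪ T) = 0`, `t(t-1)·𝔼 P(S ∪ B) = (t-k)((t-1)·P(S) - k·P(T))`. If `|S| ≥ n/2`,
the first identity with `T = S` yields a subset of size `n/2`; otherwise `|Sᶜ| ≥ n/2`, and either
`|P(Sᶜ)| ≥ |P(S)|` and the first identity applies to `Sᶜ`, or the second one with `T = Sᶜ` yields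
a superset of `S` of size `n/2`. Each time the loss is a ratio of binomials `C(·,2)`, which is at
least `1/8` once `n ≥ 6`.
-/

open Finset

/-- The number of edges of `G` inside the vertex subset `S`. -/
noncomputable def interiorEdges {V : Type*} (G : SimpleGraph V) (S : Finset V) : ℕ :=
  Nat.card {e : Sym2 V // e ∈ G.edgeSet ∧ ∀ v ∈ e, v ∈ S}

lemma exists_le_abs_of_card_mul_le_abs_sum {ι : Type*} {s : Finset ι} (hs : s.Nonempty)
    {f : ι → ℝ} {c : ℝ} (h : #s * c ≤ |∑ i ∈ s, f i|) : ∃ i ∈ s, c ≤ |f i| :=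
  exists_le_of_sum_le hs <| by
    rw [sum_const, nsmul_eq_mul]
    exact h.trans (abs_sum_le_sum_abs f s)

section PairSum

variable {V : Type*}

def pairSum (w : V → V → ℝ) (X : Finset V) : ℝ := ∑ u ∈ X, ∑ v ∈ X, w u v

variable [DecidableEq V]

lemma choose_mul_card_filter_powersetCard_subset {A T : Finset V} (hAT : A ⊆ T) (k : ℕ) :
    (#T).choose #A * #{B ∈ T.powersetCard k | A ⊆ B} = (#T).choose k * k.choose #A := by
  by_cases hk : #A ≤ k
  · rw [card_filter_powersetCard_subset A T k hAT hk, Nat.choose_mul hk]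
  · have hempty : {B ∈ T.powersetCard k | A ⊆ B} = ∅ := filter_eq_empty_iff.2 fun B hB hAB =>
      hk ((card_le_card hAB).trans (mem_powersetCard.1 hB).2.le)
    simp [hempty, Nat.choose_eq_zero_of_lt (not_le.1 hk)]

lemma card_mul_sum_powersetCard_sum (T : Finset V) (k : ℕ) (g : V → ℝ) :
    (#T : ℝ) * ∑ B ∈ T.powersetCard k, ∑ v ∈ B, g v = k * (#T).choose k * ∑ v ∈ T, g v := by
  have hswap : ∑ B ∈ T.powersetCard k, ∑ v ∈ B, g v
      = ∑ v ∈ T, #{B ∈ T.powersetCard k | {v} ⊆ B} * g v := by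
    rw [sum_comm' (t' := T) (s' := fun v => {B ∈ T.powersetCard k | {v} ⊆ B})]
    · simp only [sum_const, nsmul_eq_mul]
    · intro B v
      simp only [mem_filter, mem_powersetCard, singleton_subset_iff]
      exact ⟨fun h => ⟨⟨h.1, h.2⟩, h.1.1 h.2⟩, fun h => ⟨h.1.1, h.1.2⟩⟩
  rw [hswap, mul_sum, mul_sum]
  refine sum_congr rfl fun v hv => ?_
  have hcount := choose_mul_card_filter_powersetCard_subset (singleton_subset_iff.2 hv) k
  simp only [card_singleton, Nat.choose_one_right] at hcount
  rw [← mul_assoc, mul_comm (k : ℝ)]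
  exact_mod_cast congrArg (fun n : ℕ => (n : ℝ) * g v) hcount

lemma choose_two_mul_sum_powersetCard_pairSum {w : V → V → ℝ} (hw : ∀ u, w u u = 0)
    (T : Finset V) (k : ℕ) :
    ((#T).choose 2 : ℝ) * ∑ B ∈ T.powersetCard k, pairSum w B
      = (#T).choose k * k.choose 2 * pairSum w T := by
  have hswap : ∑ B ∈ T.powersetCard k, pairSum w B
      = ∑ p ∈ T ×ˢ T, #{B ∈ T.powersetCard k | {p.1, p.2} ⊆ B} * w p.1 p.2 := by
    simp only [pairSum, ← sum_product']
    rw [sum_comm' (t' := T ×ˢ T) (s' := fun p => {B ∈ T.powersetCard k | {p.1, p.2} ⊆ B})]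
    · simp only [sum_const, nsmul_eq_mul]
    · intro B p
      simp only [mem_filter, mem_powersetCard, mem_product, insert_subset_iff,
        singleton_subset_iff]
      exact ⟨fun h => ⟨⟨h.1, h.2⟩, h.1.1 h.2.1, h.1.1 h.2.2⟩, fun h => ⟨h.1.1, h.1.2⟩⟩
  rw [hswap, pairSum, ← sum_product', mul_sum, mul_sum]
  refine sum_congr rfl fun p hp => ?_
  obtain ⟨hu, hv⟩ := mem_product.1 hp
  rcases eq_or_ne p.1 p.2 with huv | huv
  · simp [huv, hw]
  have hcount := choose_mul_card_filter_powersetCard_subset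
    (insert_subset_iff.2 ⟨hu, singleton_subset_iff.2 hv⟩) k
  rw [card_pair huv] at hcount
  rw [← mul_assoc]
  exact_mod_cast congrArg (fun n : ℕ => (n : ℝ) * w p.1 p.2) hcount

lemma pairSum_union (w : V → V → ℝ) {S B : Finset V} (h : Disjoint S B) :
    pairSum w (S ∪ B) = pairSum w S + ∑ u ∈ S, ∑ v ∈ B, w u v + ∑ u ∈ B, ∑ v ∈ S, w u v
      + pairSum w B := by
  simp only [pairSum, sum_union h, sum_add_distrib]
  ring

lemma card_mul_sum_powersetCard_pairSum_union {w : V → V → ℝ} (hw : ∀ u, w u u = 0)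
    {S T : Finset V} (hST : Disjoint S T) (k : ℕ) :
    (#T : ℝ) * (#T - 1) * ∑ B ∈ T.powersetCard k, pairSum w (S ∪ B)
      = (#T).choose k * ((#T - k) * (#T - 1) * pairSum w S + k * (#T - 1) * pairSum w (S ∪ T)
          - k * (#T - k) * pairSum w T) := by
  have hsplit : ∑ B ∈ T.powersetCard k, pairSum w (S ∪ B)
      = (#T).choose k * pairSum w S
        + ∑ u ∈ S, ∑ B ∈ T.powersetCard k, ∑ v ∈ B, w u v
        + ∑ B ∈ T.powersetCard k, ∑ u ∈ B, ∑ v ∈ S, w u v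
        + ∑ B ∈ T.powersetCard k, pairSum w B := by
    rw [sum_congr rfl fun B hB =>
      pairSum_union w (hST.mono_right (mem_powersetCard.1 hB).1)]
    simp only [sum_add_distrib, sum_const, card_powersetCard, nsmul_eq_mul]
    rw [sum_comm]
  have hcross₁ : (#T : ℝ) * ∑ u ∈ S, ∑ B ∈ T.powersetCard k, ∑ v ∈ B, w u v
      = k * (#T).choose k * ∑ u ∈ S, ∑ v ∈ T, w u v := by
    rw [mul_sum, mul_sum]
    exact sum_congr rfl fun u _ => card_mul_sum_powersetCard_sum T k (w u)
  have hcross₂ := card_mul_sum_powersetCard_sum T k fun u => ∑ v ∈ S, w u v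
  have hinner := choose_two_mul_sum_powersetCard_pairSum hw T k
  have hunion := pairSum_union w hST
  rw [Nat.cast_choose_two, Nat.cast_choose_two] at hinner
  rw [hsplit]
  linear_combination (#T - 1 : ℝ) * hcross₁ + (#T - 1 : ℝ) * hcross₂ + 2 * hinner
    - (k * (#T - 1) * (#T).choose k : ℝ) * hunion

lemma exists_subset_card_eq_choose_two_mul_abs_pairSum_le {w : V → V → ℝ}
    (hw : ∀ u, w u u = 0) {T : Finset V} {k : ℕ} (hk : k ≤ #T) :
    ∃ B ⊆ T, #B = k ∧ (k.choose 2 : ℝ) * |pairSum w T| ≤ (#T).choose 2 * |pairSum w B| := by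
  obtain ⟨B, hB, hle⟩ := exists_le_abs_of_card_mul_le_abs_sum (powersetCard_nonempty.2 hk)
    (f := fun B => ((#T).choose 2 : ℝ) * pairSum w B) (c := k.choose 2 * |pairSum w T|) <| by
      rw [← mul_sum, choose_two_mul_sum_powersetCard_pairSum hw, card_powersetCard,
        abs_mul, abs_mul, Nat.abs_cast, Nat.abs_cast, mul_assoc]
  rw [mem_powersetCard] at hB
  exact ⟨B, hB.1, hB.2, by rwa [abs_mul, Nat.abs_cast] at hle⟩

lemma exists_subset_card_eq_choose_two_mul_abs_pairSum_union_le {w : V → V → ℝ}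
    (hw : ∀ u, w u u = 0) {S T : Finset V} (hST : Disjoint S T)
    (hcover : pairSum w (S ∪ T) = 0) {k : ℕ} (hk : k ≤ #T)
    (hTS : |pairSum w T| ≤ |pairSum w S|) :
    ∃ B ⊆ T, #B = k ∧
      ((#T - k).choose 2 : ℝ) * |pairSum w S| ≤ (#T).choose 2 * |pairSum w (S ∪ B)| := by
  set a := pairSum w S
  set b := pairSum w T
  have htk : (0 : ℝ) ≤ #T - k := sub_nonneg.2 (Nat.cast_le.2 hk)
  have hsum : ((#T).choose 2 : ℝ) * ∑ B ∈ T.powersetCard k, pairSum w (S ∪ B)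
      = (#T).choose k / 2 * ((#T - k) * ((#T - 1) * a - k * b)) := by
    have hid := card_mul_sum_powersetCard_pairSum_union hw hST k
    rw [hcover] at hid
    rw [Nat.cast_choose_two]
    linear_combination hid / 2
  have hbound : (#T - k) * (#T - k - 1) * |a| ≤ (#T - k) * |(#T - 1) * a - k * b| := by
    rw [mul_assoc]
    refine mul_le_mul_of_nonneg_left ?_ htk
    calc ((#T : ℝ) - k - 1) * |a| = (#T - 1) * |a| - k * |a| := by ring
      _ ≤ |(#T - 1 : ℝ)| * |a| - k * |b| :=
        sub_le_sub (mul_le_mul_of_nonneg_right (le_abs_self _) (abs_nonneg a))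
          (mul_le_mul_of_nonneg_left hTS (Nat.cast_nonneg k))
      _ ≤ |(#T - 1) * a - k * b| := by
        have := abs_sub_abs_le_abs_sub ((#T - 1 : ℝ) * a) (k * b)
        rwa [abs_mul, abs_mul, Nat.abs_cast] at this
  obtain ⟨B, hB, hle⟩ := exists_le_abs_of_card_mul_le_abs_sum (powersetCard_nonempty.2 hk)
    (f := fun B => ((#T).choose 2 : ℝ) * pairSum w (S ∪ B))
    (c := ((#T - k).choose 2 : ℝ) * |a|) <| by
      rw [← mul_sum, hsum, card_powersetCard, abs_mul, abs_mul, abs_of_nonneg htk,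
        abs_of_nonneg (by positivity : (0 : ℝ) ≤ (#T).choose k / 2), Nat.cast_choose_two,
        Nat.cast_sub hk]
      have := mul_le_mul_of_nonneg_left hbound (Nat.cast_nonneg (α := ℝ) ((#T).choose k))
      linarith
  rw [mem_powersetCard] at hB
  exact ⟨B, hB.1, hB.2, by rwa [abs_mul, Nat.abs_cast] at hle⟩

end PairSum

lemma choose_two_le_eight_mul_choose_two_half {n : ℕ} (hn : 6 ≤ n) :
    n.choose 2 ≤ 8 * (n / 2).choose 2 := by
  have hhalf : (n : ℝ) ≤ 2 * (n / 2 : ℕ) + 1 := by exact_mod_cast (by omega : n ≤ 2 * (n / 2) + 1)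
  have hthree : (3 : ℝ) ≤ (n / 2 : ℕ) := by exact_mod_cast (by omega : 3 ≤ n / 2)
  have : (n.choose 2 : ℝ) ≤ 8 * (n / 2).choose 2 := by
    rw [Nat.cast_choose_two, Nat.cast_choose_two]
    nlinarith
  exact_mod_cast this

lemma div_eight_le_of_choose_two_mul_le {n a b : ℕ} (hn : 6 ≤ n) (ha : n / 2 ≤ a) (hb : b ≤ n)
    {x y : ℝ} (hy : 0 ≤ y) (h : (a.choose 2 : ℝ) * x ≤ b.choose 2 * y) : x / 8 ≤ y := by
  have hpos : (0 : ℝ) < a.choose 2 := by exact_mod_cast Nat.choose_pos (by omega)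
  have hb8 : (b.choose 2 : ℝ) ≤ 8 * a.choose 2 := by
    exact_mod_cast (Nat.choose_le_choose 2 hb).trans
      ((choose_two_le_eight_mul_choose_two_half hn).trans
        (Nat.mul_le_mul_left 8 (Nat.choose_le_choose 2 ha)))
  have : (a.choose 2 : ℝ) * x ≤ a.choose 2 * (8 * y) := by nlinarith
  linarith [le_of_mul_le_mul_left this hpos]

theorem exists_card_eq_half_abs_pairSum_ge {V : Type*} [Fintype V] [DecidableEq V]
    {w : V → V → ℝ} (hw : ∀ u, w u u = 0) (huniv : pairSum w univ = 0)
    (hV : 6 ≤ Fintype.card V) (S : Finset V) :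
    ∃ S' : Finset V, #S' = Fintype.card V / 2 ∧ |pairSum w S| / 8 ≤ |pairSum w S'| := by
  have hcompl : #Sᶜ = Fintype.card V - #S := card_compl S
  by_cases hS : Fintype.card V / 2 ≤ #S
  · obtain ⟨U, -, hU, hle⟩ := exists_subset_card_eq_choose_two_mul_abs_pairSum_le hw hS
    exact ⟨U, hU, div_eight_le_of_choose_two_mul_le hV le_rfl (card_le_univ S) (abs_nonneg _) hle⟩
  rcases le_or_gt |pairSum w S| |pairSum w Sᶜ| with hSc | hSc
  · obtain ⟨U, -, hU, hle⟩ := exists_subset_card_eq_choose_two_mul_abs_pairSum_le hw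
      (T := Sᶜ) (k := Fintype.card V / 2) (by omega)
    refine ⟨U, hU, (div_le_div_of_nonneg_right hSc (by norm_num)).trans ?_⟩
    exact div_eight_le_of_choose_two_mul_le hV le_rfl (card_le_univ _) (abs_nonneg _) hle
  · obtain ⟨B, hBT, hB, hle⟩ := exists_subset_card_eq_choose_two_mul_abs_pairSum_union_le hw
      disjoint_compl_right (by rwa [union_compl]) (k := Fintype.card V / 2 - #S) (by omega) hSc.le
    refine ⟨S ∪ B, ?_, div_eight_le_of_choose_two_mul_le hV (by omega) (card_le_univ _)
      (abs_nonneg _) hle⟩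
    rw [card_union_of_disjoint (disjoint_compl_right.mono_right hBT), hB]
    omega

section Graph

variable {V : Type*} (G : SimpleGraph V) [DecidableRel G.Adj]

lemma two_mul_interiorEdges [Fintype V] (X : Finset V) :
    2 * (interiorEdges G X : ℝ) = ∑ u ∈ X, ∑ v ∈ X, if G.Adj u v then 1 else 0 := by
  classical
  let H := SimpleGraph.fromEdgeSet {e | e ∈ G.edgeSet ∧ ∀ v ∈ e, v ∈ X}
  have hadj (u v : V) : H.Adj u v ↔ u ∈ X ∧ v ∈ X ∧ G.Adj u v := by
    simp only [H, SimpleGraph.fromEdgeSet_adj, Set.mem_ofPred_eq, SimpleGraph.mem_edgeSet,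
      Sym2.mem_iff, forall_eq_or_imp, forall_eq]
    exact ⟨fun h => ⟨h.1.2.1, h.1.2.2, h.1.1⟩, fun h => ⟨⟨h.2.2, h.1, h.2.1⟩, h.2.2.ne⟩⟩
  have hcard : interiorEdges G X = Nat.card H.edgeSet := by
    refine Nat.card_congr (Equiv.subtypeEquivRight fun e => ?_)
    rw [SimpleGraph.edgeSet_fromEdgeSet]
    exact ⟨fun h => ⟨h, fun hd => G.not_isDiag_of_mem_edgeSet h.1 hd⟩, fun h => h.1⟩
  have hdarts := H.two_mul_card_edgeFinset
  simp only [SimpleGraph.edgeFinset, Set.toFinset_card, ← Nat.card_eq_fintype_card,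
    ← hcard] at hdarts
  rw [← Nat.cast_ofNat, ← Nat.cast_mul, hdarts, natCast_card_filter, ← univ_product_univ,
    sum_product]
  simp only [hadj, ite_and, sum_ite_irrel, sum_const_zero, sum_ite_mem, univ_inter]

lemma interiorEdges_univ [Fintype V] : interiorEdges G univ = #G.edgeFinset := by
  rw [SimpleGraph.edgeFinset_card, ← Nat.card_eq_fintype_card]
  exact Nat.card_congr (Equiv.subtypeEquivRight fun e => by simp)

variable [DecidableEq V]

lemma two_mul_choose_two_card (X : Finset V) :
    2 * ((#X).choose 2 : ℝ) = ∑ u ∈ X, ∑ v ∈ X, if u = v then 0 else 1 := by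
  have hrow (u : V) (hu : u ∈ X) : ∑ v ∈ X, (if u = v then 0 else 1 : ℝ) = #X - 1 := by
    simp [sum_ite, filter_ne, hu, Nat.cast_sub (one_le_card.2 ⟨u, hu⟩)]
  rw [sum_congr rfl hrow, sum_const, nsmul_eq_mul, Nat.cast_choose_two]
  ring

def discWeight (q : ℝ) (u v : V) : ℝ := (if G.Adj u v then 1 else 0) - q * if u = v then 0 else 1

lemma discWeight_self (q : ℝ) (u : V) : discWeight G q u u = 0 := by simp [discWeight]

lemma pairSum_discWeight [Fintype V] (q : ℝ) (X : Finset V) :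
    pairSum (discWeight G q) X = 2 * ((interiorEdges G X : ℝ) - q * (#X).choose 2) := by
  simp only [pairSum, discWeight, sum_sub_distrib, ← mul_sum]
  rw [← two_mul_interiorEdges, ← two_mul_choose_two_card]
  ring

end Graph

theorem stmt_18 :
    ∃ n₀ : ℕ, ∀ (V : Type) [Fintype V] [DecidableEq V] (G : SimpleGraph V)
      [DecidableRel G.Adj],
      n₀ ≤ Fintype.card V →
      ∀ q D : ℝ,
        q = (G.edgeFinset.card : ℝ) / ((Fintype.card V).choose 2 : ℝ) →
        (∃ S : Finset V,
          D ≤ |(interiorEdges G S : ℝ) - q * (S.card.choose 2 : ℝ)|) →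
        ∃ S' : Finset V, S'.card = Fintype.card V / 2 ∧
          D / 8 ≤ |(interiorEdges G S' : ℝ) - q * (S'.card.choose 2 : ℝ)| := by
  refine ⟨6, fun V _ _ G _ hV q D hq ⟨S, hS⟩ => ?_⟩
  have hchoose : ((Fintype.card V).choose 2 : ℝ) ≠ 0 :=
    Nat.cast_ne_zero.2 (Nat.choose_pos (by omega)).ne'
  have huniv : pairSum (discWeight G q) univ = 0 := by
    rw [pairSum_discWeight, interiorEdges_univ, card_univ, hq, div_mul_cancel₀ _ hchoose,
      sub_self, mul_zero]
  obtain ⟨S', hcard, hS'⟩ := exists_card_eq_half_abs_pairSum_ge (discWeight_self G q) huniv hV S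
  refine ⟨S', hcard, ?_⟩
  rw [pairSum_discWeight, pairSum_discWeight, abs_mul, abs_mul, abs_two] at hS'
  linarith
end
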